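/- arXiv:2503.19166 — 8 statements merged into one kernel-verified Lean document; each statement's English description precedes it below -/
import Mathlib

section
/- For the bi-objective problem ORZR with f1 = OneRoyalRoad and f2 = ZeroRoyalRoad on bit-strings of length n = b·ℓ (b > 1), the Pareto set equals exactly the set of bit-strings x in which every block is an all-ones block or an all-zeros block, i.e. the number of all-ones blocks of x plus the number of all-zeros blocks of x equals b. -/
open Finset

/-- Number of one-bits of a bit-string. -/
def onesCount {n : ℕ} (x : Fin n → Bool) : ℕ :=
  (Finset.univ.filter fun i => x i = true).card

/-- Number of zero-bits of a bit-string. -/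
def zerosCount {n : ℕ} (x : Fin n → Bool) : ℕ :=
  (Finset.univ.filter fun i => x i = false).card

/-- Number of leading one-bits. -/
def leadingOnes {n : ℕ} (x : Fin n → Bool) : ℕ :=
  (Finset.univ.filter fun i : Fin n => ∀ j : Fin n, j ≤ i → x j = true).card

/-- Number of trailing zero-bits. -/
def trailingZeroes {n : ℕ} (x : Fin n → Bool) : ℕ :=
  (Finset.univ.filter fun i : Fin n => ∀ j : Fin n, i ≤ j → x j = false).card

/-- `y` dominates `x` for the bi-objective maximisation problem `(f1, f2)`. -/
def dominates {n : ℕ} (f1 f2 : (Fin n → Bool) → ℕ) (y x : Fin n → Bool) : Prop :=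
  f1 x ≤ f1 y ∧ f2 x ≤ f2 y ∧ (f1 x < f1 y ∨ f2 x < f2 y)

/-- `x` is Pareto optimal: no solution dominates it. -/
def paretoOptimal {n : ℕ} (f1 f2 : (Fin n → Bool) → ℕ) (x : Fin n → Bool) : Prop :=
  ∀ y, ¬ dominates f1 f2 y x

/-- `x` is a non-global Pareto local optimum: not Pareto optimal, and not dominated by
any bit-string at Hamming distance exactly 1. -/
def nonGlobalParetoLocalOpt {n : ℕ} (f1 f2 : (Fin n → Bool) → ℕ) (x : Fin n → Bool) : Prop :=
  ¬ paretoOptimal f1 f2 x ∧ ∀ y, hammingDist y x = 1 → ¬ dominates f1 f2 y x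

/-- The ZeroJump function with jump parameter `k`. -/
def zeroJump (n k : ℕ) (x : Fin n → Bool) : ℕ :=
  if zerosCount x ≤ n - k ∨ x = (fun _ => false) then k + zerosCount x else n - zerosCount x

/-- The OneJump function with jump parameter `k`. -/
def oneJump (n k : ℕ) (x : Fin n → Bool) : ℕ :=
  if onesCount x ≤ n - k ∨ x = (fun _ => true) then k + onesCount x else n - onesCount x

/-- Block `j` (0-indexed) of the bit-string `x` (with `b` blocks of length `ℓ`) is all-ones. -/
def blockAllOnes (b ℓ : ℕ) (x : Fin (b * ℓ) → Bool) (j : Fin b) : Prop :=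
  ∀ i : Fin (b * ℓ), (i : ℕ) / ℓ = (j : ℕ) → x i = true

/-- Block `j` (0-indexed) of the bit-string `x` is all-zeros. -/
def blockAllZeros (b ℓ : ℕ) (x : Fin (b * ℓ) → Bool) (j : Fin b) : Prop :=
  ∀ i : Fin (b * ℓ), (i : ℕ) / ℓ = (j : ℕ) → x i = false

instance (b ℓ : ℕ) (x : Fin (b * ℓ) → Bool) (j : Fin b) : Decidable (blockAllOnes b ℓ x j) := by
  unfold blockAllOnes; infer_instance

instance (b ℓ : ℕ) (x : Fin (b * ℓ) → Bool) (j : Fin b) : Decidable (blockAllZeros b ℓ x j) := by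
  unfold blockAllZeros; infer_instance

/-- OneRoyalRoad: `ℓ` times the number of all-ones blocks. -/
def oneRoyalRoad (b ℓ : ℕ) (x : Fin (b * ℓ) → Bool) : ℕ :=
  ℓ * (Finset.univ.filter fun j : Fin b => blockAllOnes b ℓ x j).card

/-- ZeroRoyalRoad: `ℓ` times the number of all-zeros blocks. -/
def zeroRoyalRoad (b ℓ : ℕ) (x : Fin (b * ℓ) → Bool) : ℕ :=
  ℓ * (Finset.univ.filter fun j : Fin b => blockAllZeros b ℓ x j).card

/-- Number of one-bits in block `j` of `x`. -/
def blockOnes (b ℓ : ℕ) (x : Fin (b * ℓ) → Bool) (j : Fin b) : ℕ :=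
  (Finset.univ.filter fun i : Fin (b * ℓ) => (i : ℕ) / ℓ = (j : ℕ) ∧ x i = true).card

/-- Number of zero-bits in block `j` of `x`. -/
def blockZeros (b ℓ : ℕ) (x : Fin (b * ℓ) → Bool) (j : Fin b) : ℕ :=
  (Finset.univ.filter fun i : Fin (b * ℓ) => (i : ℕ) / ℓ = (j : ℕ) ∧ x i = false).card

/-!
A block cannot be both all-ones and all-zeros, so the all-ones and all-zeros blocks are
disjoint and at most `b` in number. If they number exactly `b`, a dominating solution would
have strictly more of them in total, which is impossible. Otherwise some block is mixed;
setting it to all-ones gains one all-ones block and loses no all-zeros block, so the new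
solution dominates.
-/

namespace RoyalRoad

variable {b ℓ : ℕ}

abbrev onesBlocks (x : Fin (b * ℓ) → Bool) : Finset (Fin b) :=
  univ.filter fun j => blockAllOnes b ℓ x j

abbrev zerosBlocks (x : Fin (b * ℓ) → Bool) : Finset (Fin b) :=
  univ.filter fun j => blockAllZeros b ℓ x j

lemma oneRoyalRoad_eq (x : Fin (b * ℓ) → Bool) :
    oneRoyalRoad b ℓ x = ℓ * (onesBlocks x).card := rfl

lemma zeroRoyalRoad_eq (x : Fin (b * ℓ) → Bool) :
    zeroRoyalRoad b ℓ x = ℓ * (zerosBlocks x).card := rfl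

lemma exists_mem_block (hℓ : 1 ≤ ℓ) (j : Fin b) : ∃ i : Fin (b * ℓ), (i : ℕ) / ℓ = j :=
  ⟨⟨j * ℓ, Nat.mul_lt_mul_of_lt_of_le j.isLt le_rfl hℓ⟩, Nat.mul_div_cancel _ hℓ⟩

lemma disjoint_onesBlocks_zerosBlocks (hℓ : 1 ≤ ℓ) (x : Fin (b * ℓ) → Bool) :
    Disjoint (onesBlocks x) (zerosBlocks x) := by
  refine disjoint_filter.2 fun j _ hones hzeros => ?_
  obtain ⟨i, hi⟩ := exists_mem_block hℓ j
  simpa [hones i hi] using hzeros i hi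

lemma card_onesBlocks_add_card_zerosBlocks_le (hℓ : 1 ≤ ℓ) (x : Fin (b * ℓ) → Bool) :
    (onesBlocks x).card + (zerosBlocks x).card ≤ b := by
  rw [← card_union_of_disjoint (disjoint_onesBlocks_zerosBlocks hℓ x)]
  simpa using card_le_univ (onesBlocks x ∪ zerosBlocks x)

lemma exists_mixed_block_of_card_add_card_lt (x : Fin (b * ℓ) → Bool)
    (h : (onesBlocks x).card + (zerosBlocks x).card < b) :
    ∃ j, ¬ blockAllOnes b ℓ x j ∧ ¬ blockAllZeros b ℓ x j := by
  by_contra! hcover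
  have : univ ⊆ onesBlocks x ∪ zerosBlocks x := fun j _ => by
    by_cases hj : blockAllOnes b ℓ x j <;> simp [hj, hcover j]
  have := (card_le_card this).trans (card_union_le _ _)
  rw [card_univ, Fintype.card_fin] at this
  omega

def fillBlock (x : Fin (b * ℓ) → Bool) (j : Fin b) : Fin (b * ℓ) → Bool :=
  fun i => if (i : ℕ) / ℓ = j then true else x i

lemma fillBlock_of_ne {x : Fin (b * ℓ) → Bool} {j : Fin b} {i : Fin (b * ℓ)}
    (hi : (i : ℕ) / ℓ ≠ j) : fillBlock x j i = x i :=
  if_neg hi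

lemma insert_onesBlocks_subset_onesBlocks_fillBlock (x : Fin (b * ℓ) → Bool) (j : Fin b) :
    insert j (onesBlocks x) ⊆ onesBlocks (fillBlock x j) := by
  refine insert_subset_iff.2 ⟨?_, fun k hk => ?_⟩
  · simp +contextual [blockAllOnes, fillBlock]
  · simp only [mem_filter, mem_univ, true_and, blockAllOnes] at hk ⊢
    intro i hi
    by_cases hij : (i : ℕ) / ℓ = j
    · simp [fillBlock, hij]
    · rw [fillBlock_of_ne hij, hk i hi]

lemma zerosBlocks_subset_zerosBlocks_fillBlock {x : Fin (b * ℓ) → Bool} {j : Fin b}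
    (hj : ¬ blockAllZeros b ℓ x j) : zerosBlocks x ⊆ zerosBlocks (fillBlock x j) := by
  intro k hk
  simp only [mem_filter, mem_univ, true_and] at hk ⊢
  have hkj : (k : ℕ) ≠ j := fun h => hj (Fin.ext h ▸ hk)
  intro i hi
  rw [fillBlock_of_ne (hi ▸ hkj), hk i hi]

lemma fillBlock_dominates (hℓ : 1 ≤ ℓ) {x : Fin (b * ℓ) → Bool} {j : Fin b}
    (hones : ¬ blockAllOnes b ℓ x j) (hzeros : ¬ blockAllZeros b ℓ x j) :
    dominates (oneRoyalRoad b ℓ) (zeroRoyalRoad b ℓ) (fillBlock x j) x := by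
  have hlt : (onesBlocks x).card < (onesBlocks (fillBlock x j)).card :=
    calc (onesBlocks x).card < (insert j (onesBlocks x)).card :=
          card_lt_card (ssubset_insert (by simp [hones]))
      _ ≤ _ := card_le_card (insert_onesBlocks_subset_onesBlocks_fillBlock x j)
  have hle : (zerosBlocks x).card ≤ (zerosBlocks (fillBlock x j)).card :=
    card_le_card (zerosBlocks_subset_zerosBlocks_fillBlock hzeros)
  exact ⟨Nat.mul_le_mul_left ℓ hlt.le, Nat.mul_le_mul_left ℓ hle,
    Or.inl (Nat.mul_lt_mul_of_pos_left hlt hℓ)⟩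

lemma not_dominates_of_card_add_card_eq (hℓ : 1 ≤ ℓ) {x : Fin (b * ℓ) → Bool}
    (hx : (onesBlocks x).card + (zerosBlocks x).card = b) (y : Fin (b * ℓ) → Bool) :
    ¬ dominates (oneRoyalRoad b ℓ) (zeroRoyalRoad b ℓ) y x := by
  rintro ⟨hones, hzeros, hstrict⟩
  simp only [oneRoyalRoad_eq, zeroRoyalRoad_eq] at hones hzeros hstrict
  have hO := Nat.le_of_mul_le_mul_left hones hℓ
  have hZ := Nat.le_of_mul_le_mul_left hzeros hℓ
  have hy := card_onesBlocks_add_card_zerosBlocks_le hℓ y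
  rcases hstrict with h | h <;> have := Nat.lt_of_mul_lt_mul_left h <;> omega

end RoyalRoad

open RoyalRoad in
theorem ORZR_pareto_set_general (b ℓ : ℕ) (hℓ : 1 ≤ ℓ) (x : Fin (b * ℓ) → Bool) :
    paretoOptimal (oneRoyalRoad b ℓ) (zeroRoyalRoad b ℓ) x ↔
      (Finset.univ.filter fun j : Fin b => blockAllOnes b ℓ x j).card +
        (Finset.univ.filter fun j : Fin b => blockAllZeros b ℓ x j).card = b := by
  refine ⟨fun hpareto => ?_, fun hx => not_dominates_of_card_add_card_eq hℓ hx⟩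
  by_contra hne
  obtain ⟨j, hones, hzeros⟩ := exists_mixed_block_of_card_add_card_lt x
    ((card_onesBlocks_add_card_zerosBlocks_le hℓ x).lt_of_ne hne)
  exact hpareto _ (fillBlock_dominates hℓ hones hzeros)

/-- For ORZR (f1 = OneRoyalRoad, f2 = ZeroRoyalRoad) on bit-strings of length
n = b·ℓ with b > 1, the Pareto set is exactly the set of bit-strings in which every block is
all-ones or all-zeros, i.e. the number of all-ones blocks plus the number of all-zeros blocks
equals b. -/
theorem ORZR_pareto_set (b ℓ : ℕ) (hb : 1 < b) (hℓ : 1 ≤ ℓ) (x : Fin (b * ℓ) → Bool) :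
    paretoOptimal (oneRoyalRoad b ℓ) (zeroRoyalRoad b ℓ) x ↔
      (Finset.univ.filter fun j : Fin b => blockAllOnes b ℓ x j).card +
        (Finset.univ.filter fun j : Fin b => blockAllZeros b ℓ x j).card = b :=
  ORZR_pareto_set_general b ℓ hℓ x
end

section
/- For the bi-objective problem ORZR with f1 = OneRoyalRoad and f2 = ZeroRoyalRoad on bit-strings of length n = b·ℓ with b > 1 and block length ℓ > 3, the set of non-global Pareto local optima equals exactly the set of bit-strings x that are not Pareto optimal (i.e., at least one block of x is neither all-ones nor all-zeros) and such that every block of x that is neither all-ones nor all-zeros contains at least two one-bits and at least two zero-bits. -/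
open Finset

/- ------------------ auxiliary lemmas ------------------ -/

lemma card_filter_off_one {b : ℕ} (P Q : Fin b → Prop) [DecidablePred P] [DecidablePred Q]
    (j : Fin b) (h : ∀ k, k ≠ j → (P k ↔ Q k)) :
    (univ.filter P).card + (if Q j then 1 else 0)
      = (univ.filter Q).card + (if P j then 1 else 0) := by
  rw [Finset.card_filter, Finset.card_filter,
    ← Finset.add_sum_erase univ (fun k => if P k then 1 else 0) (mem_univ j),
    ← Finset.add_sum_erase univ (fun k => if Q k then 1 else 0) (mem_univ j)]
  have : ∑ k ∈ univ.erase j, (if P k then 1 else 0)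
      = ∑ k ∈ univ.erase j, (if Q k then 1 else 0) := by
    apply Finset.sum_congr rfl
    intro k hk
    simp only [mem_erase] at hk
    simp [h k hk.1]
  omega

lemma hamming_update {n : ℕ} (x : Fin n → Bool) (i : Fin n) (v : Bool) (hv : x i ≠ v) :
    hammingDist (Function.update x i v) x = 1 := by
  have : (univ.filter fun k => Function.update x i v k ≠ x k) = {i} := by
    ext k
    simp only [mem_filter, mem_univ, true_and, mem_singleton]
    constructor
    · intro hk
      by_contra hki
      rw [Function.update_of_ne hki] at hk
      exact hk rfl
    · rintro rfl
      rw [Function.update_self]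
      exact fun h => hv h.symm
  rw [hammingDist, this, card_singleton]

lemma block_ones_off {b ℓ : ℕ} (x : Fin (b * ℓ) → Bool) (i : Fin (b * ℓ)) (v : Bool)
    (j : Fin b) (hij : (i : ℕ) / ℓ = (j : ℕ)) (k : Fin b) (hk : k ≠ j) :
    blockAllOnes b ℓ (Function.update x i v) k ↔ blockAllOnes b ℓ x k := by
  have key : ∀ i' : Fin (b * ℓ), (i' : ℕ) / ℓ = (k : ℕ) → i' ≠ i := by
    intro i' hi' he
    subst he
    exact hk (Fin.ext (hi'.symm.trans hij))
  constructor <;> intro h i' hi'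
  · have := h i' hi'
    rwa [Function.update_of_ne (key i' hi')] at this
  · rw [Function.update_of_ne (key i' hi')]
    exact h i' hi'

lemma block_zeros_off {b ℓ : ℕ} (x : Fin (b * ℓ) → Bool) (i : Fin (b * ℓ)) (v : Bool)
    (j : Fin b) (hij : (i : ℕ) / ℓ = (j : ℕ)) (k : Fin b) (hk : k ≠ j) :
    blockAllZeros b ℓ (Function.update x i v) k ↔ blockAllZeros b ℓ x k := by
  have key : ∀ i' : Fin (b * ℓ), (i' : ℕ) / ℓ = (k : ℕ) → i' ≠ i := by
    intro i' hi' he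
    subst he
    exact hk (Fin.ext (hi'.symm.trans hij))
  constructor <;> intro h i' hi'
  · have := h i' hi'
    rwa [Function.update_of_ne (key i' hi')] at this
  · rw [Function.update_of_ne (key i' hi')]
    exact h i' hi'

/-- key equation for oneRoyalRoad after an update -/
lemma oneRR_update {b ℓ : ℕ} (x : Fin (b * ℓ) → Bool) (i : Fin (b * ℓ)) (v : Bool)
    (j : Fin b) (hij : (i : ℕ) / ℓ = (j : ℕ)) :
    oneRoyalRoad b ℓ (Function.update x i v)
        + ℓ * (if blockAllOnes b ℓ x j then 1 else 0)
      = oneRoyalRoad b ℓ x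
        + ℓ * (if blockAllOnes b ℓ (Function.update x i v) j then 1 else 0) := by
  have hcard := card_filter_off_one (fun k => blockAllOnes b ℓ (Function.update x i v) k)
    (fun k => blockAllOnes b ℓ x k) j (fun k hk => block_ones_off x i v j hij k hk)
  unfold oneRoyalRoad
  rw [← Nat.mul_add, ← Nat.mul_add, hcard]

lemma zeroRR_update {b ℓ : ℕ} (x : Fin (b * ℓ) → Bool) (i : Fin (b * ℓ)) (v : Bool)
    (j : Fin b) (hij : (i : ℕ) / ℓ = (j : ℕ)) :
    zeroRoyalRoad b ℓ (Function.update x i v)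
        + ℓ * (if blockAllZeros b ℓ x j then 1 else 0)
      = zeroRoyalRoad b ℓ x
        + ℓ * (if blockAllZeros b ℓ (Function.update x i v) j then 1 else 0) := by
  have hcard := card_filter_off_one (fun k => blockAllZeros b ℓ (Function.update x i v) k)
    (fun k => blockAllZeros b ℓ x k) j (fun k hk => block_zeros_off x i v j hij k hk)
  unfold zeroRoyalRoad
  rw [← Nat.mul_add, ← Nat.mul_add, hcard]

/-- For ORZR with b > 1 and ℓ > 3, the non-global Pareto local optima are exactly
the non-Pareto-optimal bit-strings in which every block that is neither all-ones nor all-zeros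
contains at least two one-bits and at least two zero-bits. -/
theorem ORZR_local_opts (b ℓ : ℕ) (hb : 1 < b) (hℓ : 3 < ℓ) (x : Fin (b * ℓ) → Bool) :
    nonGlobalParetoLocalOpt (oneRoyalRoad b ℓ) (zeroRoyalRoad b ℓ) x ↔
      (¬ paretoOptimal (oneRoyalRoad b ℓ) (zeroRoyalRoad b ℓ) x ∧
        ∀ j : Fin b, ¬ blockAllOnes b ℓ x j → ¬ blockAllZeros b ℓ x j →
          2 ≤ blockOnes b ℓ x j ∧ 2 ≤ blockZeros b ℓ x j) := by
  have hℓ0 : 0 < ℓ := by omega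
  constructor
  · rintro ⟨hnpo, hloc⟩
    refine ⟨hnpo, ?_⟩
    intro j h1 h0
    obtain ⟨i1, hi1j, hi1⟩ : ∃ i : Fin (b * ℓ), (i : ℕ) / ℓ = (j : ℕ) ∧ x i = false := by
      by_contra h
      push_neg at h
      exact h1 fun i hi => by
        have := h i hi
        simpa using this
    obtain ⟨i2, hi2j, hi2⟩ : ∃ i : Fin (b * ℓ), (i : ℕ) / ℓ = (j : ℕ) ∧ x i = true := by
      by_contra h
      push_neg at h
      exact h0 fun i hi => by
        have := h i hi
        simpa using this
    constructor
    · -- at least two ones; otherwise flip the unique one to 0 and dominate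
      by_contra hlt
      have h1le : blockOnes b ℓ x j = 1 := by
        have : 0 < blockOnes b ℓ x j :=
          Finset.card_pos.mpr ⟨i2, by simp [hi2j, hi2]⟩
        omega
      obtain ⟨a, ha⟩ := Finset.card_eq_one.mp h1le
      have hamem : (a : ℕ) / ℓ = (j : ℕ) ∧ x a = true := by
        have : a ∈ (univ.filter fun i : Fin (b * ℓ) => (i : ℕ) / ℓ = (j : ℕ) ∧ x i = true) := by
          rw [ha]; exact mem_singleton_self a
        simpa using this
      have hdist : hammingDist (Function.update x a false) x = 1 :=
        hamming_update x a false (by simp [hamem.2])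
      have hyz : blockAllZeros b ℓ (Function.update x a false) j := by
        intro i' hi'
        by_cases hia : i' = a
        · subst hia; simp
        · rw [Function.update_of_ne hia]
          by_contra hxi'
          have hi'mem : i' ∈ (univ.filter fun i : Fin (b * ℓ) =>
              (i : ℕ) / ℓ = (j : ℕ) ∧ x i = true) := by
            simp only [mem_filter, mem_univ, true_and]
            exact ⟨hi', by simpa using hxi'⟩
          rw [ha, mem_singleton] at hi'mem
          exact hia hi'mem
      have hyo : ¬ blockAllOnes b ℓ (Function.update x a false) j := by
        intro h
        have := h a hamem.1
        rw [Function.update_self] at this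
        exact Bool.noConfusion this
      have e1 := oneRR_update x a false j hamem.1
      have e2 := zeroRR_update x a false j hamem.1
      rw [if_neg h1, if_neg hyo] at e1
      rw [if_neg h0, if_pos hyz] at e2
      simp only [Nat.mul_zero, Nat.mul_one, Nat.add_zero] at e1 e2
      exact hloc _ hdist ⟨by omega, by omega, Or.inr (by omega)⟩
    · by_contra hlt
      have h1le : blockZeros b ℓ x j = 1 := by
        have : 0 < blockZeros b ℓ x j :=
          Finset.card_pos.mpr ⟨i1, by simp [hi1j, hi1]⟩
        omega
      obtain ⟨a, ha⟩ := Finset.card_eq_one.mp h1le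
      have hamem : (a : ℕ) / ℓ = (j : ℕ) ∧ x a = false := by
        have : a ∈ (univ.filter fun i : Fin (b * ℓ) => (i : ℕ) / ℓ = (j : ℕ) ∧ x i = false) := by
          rw [ha]; exact mem_singleton_self a
        simpa using this
      have hdist : hammingDist (Function.update x a true) x = 1 :=
        hamming_update x a true (by simp [hamem.2])
      have hyo : blockAllOnes b ℓ (Function.update x a true) j := by
        intro i' hi'
        by_cases hia : i' = a
        · subst hia; simp
        · rw [Function.update_of_ne hia]
          by_contra hxi'
          have hi'mem : i' ∈ (univ.filter fun i : Fin (b * ℓ) =>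
              (i : ℕ) / ℓ = (j : ℕ) ∧ x i = false) := by
            simp only [mem_filter, mem_univ, true_and]
            exact ⟨hi', by simpa using hxi'⟩
          rw [ha, mem_singleton] at hi'mem
          exact hia hi'mem
      have hyz : ¬ blockAllZeros b ℓ (Function.update x a true) j := by
        intro h
        have := h a hamem.1
        rw [Function.update_self] at this
        exact Bool.noConfusion this
      have e1 := oneRR_update x a true j hamem.1
      have e2 := zeroRR_update x a true j hamem.1
      rw [if_neg h1, if_pos hyo] at e1
      rw [if_neg h0, if_neg hyz] at e2
      simp only [Nat.mul_zero, Nat.mul_one, Nat.add_zero] at e1 e2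
      exact hloc _ hdist ⟨by omega, by omega, Or.inl (by omega)⟩
  · rintro ⟨hnpo, hbl⟩
    refine ⟨hnpo, ?_⟩
    intro y hdist hdom
    have hcard : (univ.filter fun k => y k ≠ x k).card = 1 := hdist
    obtain ⟨i, hi⟩ := Finset.card_eq_one.mp hcard
    have hmem : ∀ k : Fin (b * ℓ), y k ≠ x k ↔ k = i := by
      intro k
      rw [← Finset.mem_singleton, ← hi, Finset.mem_filter]
      simp
    have hyi : y i ≠ x i := (hmem i).mpr rfl
    have hyupd : y = Function.update x i (y i) := by
      funext k
      by_cases hk : k = i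
      · subst hk; simp
      · rw [Function.update_of_ne hk]
        by_contra h
        exact hk ((hmem k).mp h)
    have hjlt : (i : ℕ) / ℓ < b := (Nat.div_lt_iff_lt_mul hℓ0).mpr i.isLt
    set j : Fin b := ⟨(i : ℕ) / ℓ, hjlt⟩ with hjdef
    have hij : (i : ℕ) / ℓ = (j : ℕ) := rfl
    have e1 := oneRR_update x i (y i) j hij
    have e2 := zeroRR_update x i (y i) j hij
    rw [← hyupd] at e1 e2
    obtain ⟨hd1, hd2, hd3⟩ := hdom
    by_cases hAO : blockAllOnes b ℓ x j
    · have hxi : x i = true := hAO i hij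
      have hyif : y i = false := by
        cases hv : y i
        · rfl
        · exact absurd (hv.trans hxi.symm) hyi
      have hyAO : ¬ blockAllOnes b ℓ y j := by
        intro h
        have := h i hij
        rw [this] at hyif; exact Bool.noConfusion hyif
      rw [if_pos hAO, if_neg hyAO] at e1
      simp only [Nat.mul_zero, Nat.mul_one, Nat.add_zero] at e1
      omega
    · by_cases hAZ : blockAllZeros b ℓ x j
      · have hxi : x i = false := hAZ i hij
        have hyit : y i = true := by
          cases hv : y i
          · exact absurd (hv.trans hxi.symm) hyi
          · rfl
        have hyAZ : ¬ blockAllZeros b ℓ y j := by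
          intro h
          have := h i hij
          rw [this] at hyit; exact Bool.noConfusion hyit
        rw [if_pos hAZ, if_neg hyAZ] at e2
        simp only [Nat.mul_zero, Nat.mul_one, Nat.add_zero] at e2
        omega
      · obtain ⟨h2o, h2z⟩ := hbl j hAO hAZ
        have hyAO : ¬ blockAllOnes b ℓ y j := by
          obtain ⟨a, hamem, c, hcmem, hac⟩ := Finset.one_lt_card.mp
            (lt_of_lt_of_le one_lt_two h2z)
          simp only [mem_filter, mem_univ, true_and] at hamem hcmem
          rcases (em (a = i)) with rfl | hane
          · intro h
            have := h c hcmem.1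
            rw [hyupd, Function.update_of_ne (fun he => hac he.symm)] at this
            rw [hcmem.2] at this; exact Bool.noConfusion this
          · intro h
            have := h a hamem.1
            rw [hyupd, Function.update_of_ne hane] at this
            rw [hamem.2] at this; exact Bool.noConfusion this
        have hyAZ : ¬ blockAllZeros b ℓ y j := by
          obtain ⟨a, hamem, c, hcmem, hac⟩ := Finset.one_lt_card.mp
            (lt_of_lt_of_le one_lt_two h2o)
          simp only [mem_filter, mem_univ, true_and] at hamem hcmem
          rcases (em (a = i)) with rfl | hane
          · intro h
            have := h c hcmem.1
            rw [hyupd, Function.update_of_ne (fun he => hac he.symm)] at this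
            rw [hcmem.2] at this; exact Bool.noConfusion this
          · intro h
            have := h a hamem.1
            rw [hyupd, Function.update_of_ne hane] at this
            rw [hamem.2] at this; exact Bool.noConfusion this
        rw [if_neg hAO, if_neg hyAO] at e1
        rw [if_neg hAZ, if_neg hyAZ] at e2
        simp only [Nat.mul_zero, Nat.add_zero] at e1 e2
        omega
end

section
/- For the bi-objective problem ORZR with f1 = OneRoyalRoad and f2 = ZeroRoyalRoad on bit-strings of length n = b·ℓ with b > 1 and block length ℓ ≤ 3, there are no non-global Pareto local optima: every bit-string that is not Pareto optimal is dominated by some bit-string at Hamming distance exactly 1 from it. -/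
/-!
If every block of `x` is constant, then `x` attains the largest possible value `ℓ * b` of
`f₁ + f₂`, so nothing dominates it. Otherwise some block is mixed; since it has at most three
bits, one of its values occurs exactly once. Flipping that bit makes the block constant and
leaves every other block untouched, so one objective increases and the other does not drop.
-/

open Finset

theorem hammingDist_update_self {n : ℕ} (x : Fin n → Bool) (i : Fin n) {v : Bool}
    (hv : v ≠ x i) : hammingDist (Function.update x i v) x = 1 := by
  rw [hammingDist, Finset.card_eq_one]
  refine ⟨i, Finset.eq_singleton_iff_unique_mem.2 ⟨by simpa using hv, fun k hk => ?_⟩⟩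
  by_contra hki
  simp [Function.update_of_ne hki] at hk

/-- `BlockConst b ℓ true` is `blockAllOnes b ℓ` and `BlockConst b ℓ false` is `blockAllZeros b ℓ`,
so that each lemma below serves both objectives. -/
def BlockConst (b ℓ : ℕ) (v : Bool) (x : Fin (b * ℓ) → Bool) (j : Fin b) : Prop :=
  ∀ i : Fin (b * ℓ), (i : ℕ) / ℓ = j → x i = v

instance (b ℓ : ℕ) (v : Bool) (x : Fin (b * ℓ) → Bool) : DecidablePred (BlockConst b ℓ v x) :=
  fun _ => by unfold BlockConst; infer_instance

def constBlocks (b ℓ : ℕ) (v : Bool) (x : Fin (b * ℓ) → Bool) : Finset (Fin b) :=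
  univ.filter (BlockConst b ℓ v x)

theorem oneRoyalRoad_eq (b ℓ : ℕ) (x : Fin (b * ℓ) → Bool) :
    oneRoyalRoad b ℓ x = ℓ * #(constBlocks b ℓ true x) := rfl

theorem zeroRoyalRoad_eq (b ℓ : ℕ) (x : Fin (b * ℓ) → Bool) :
    zeroRoyalRoad b ℓ x = ℓ * #(constBlocks b ℓ false x) := rfl

section Blocks

variable {b ℓ : ℕ}

theorem exists_mem_block (hℓ : 1 ≤ ℓ) (j : Fin b) : ∃ i : Fin (b * ℓ), (i : ℕ) / ℓ = j :=
  ⟨⟨j * ℓ, Nat.mul_lt_mul_of_pos_right j.2 hℓ⟩, Nat.mul_div_cancel _ hℓ⟩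

theorem card_block_le (j : Fin b) :
    #(univ.filter fun i : Fin (b * ℓ) => (i : ℕ) / ℓ = j) ≤ ℓ := by
  rcases Nat.eq_zero_or_pos ℓ with rfl | hℓ
  · simp
  refine (card_le_card_of_injOn (fun i : Fin (b * ℓ) => (i : ℕ) % ℓ)
    (fun i _ => by simpa using Nat.mod_lt _ hℓ) ?_).trans_eq (card_range ℓ)
  intro i₁ h₁ i₂ h₂ (hmod : (i₁ : ℕ) % ℓ = i₂ % ℓ)
  simp only [coe_filter, mem_univ, true_and, Set.mem_ofPred_eq] at h₁ h₂
  ext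
  rw [← Nat.div_add_mod i₁ ℓ, ← Nat.div_add_mod i₂ ℓ, h₁, h₂, hmod]

theorem blockZeros_add_blockOnes_le (x : Fin (b * ℓ) → Bool) (j : Fin b) :
    blockZeros b ℓ x j + blockOnes b ℓ x j ≤ ℓ := by
  have h := card_filter_add_card_filter_not
    (s := univ.filter fun i : Fin (b * ℓ) => (i : ℕ) / ℓ = j) (fun i => x i = false)
  simp only [filter_filter, Bool.not_eq_false] at h
  exact h ▸ card_block_le j

theorem blockConst_update_iff_of_ne {x : Fin (b * ℓ) → Bool} {i₀ : Fin (b * ℓ)} {j : Fin b}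
    (hj : (i₀ : ℕ) / ℓ ≠ j) (v w : Bool) :
    BlockConst b ℓ w (Function.update x i₀ v) j ↔ BlockConst b ℓ w x j := by
  refine forall_congr' fun i => imp_congr_right fun hi => ?_
  rw [Function.update_of_ne (by rintro rfl; exact hj hi)]

theorem constBlocks_subset_update {x : Fin (b * ℓ) → Bool} {i₀ : Fin (b * ℓ)} {j : Fin b}
    (hi₀ : (i₀ : ℕ) / ℓ = j) {w : Bool} (hx : ¬ BlockConst b ℓ w x j) (v : Bool) :
    constBlocks b ℓ w x ⊆ constBlocks b ℓ w (Function.update x i₀ v) := by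
  intro k hk
  simp only [constBlocks, mem_filter, mem_univ, true_and] at hk ⊢
  have hk' : (i₀ : ℕ) / ℓ ≠ k := by rintro h; exact hx (Fin.ext (hi₀ ▸ h) ▸ hk)
  exact (blockConst_update_iff_of_ne hk' v w).2 hk

theorem constBlocks_ssubset_update {x : Fin (b * ℓ) → Bool} {i₀ : Fin (b * ℓ)} {j : Fin b}
    (hi₀ : (i₀ : ℕ) / ℓ = j) {v : Bool} (hx : ¬ BlockConst b ℓ v x j)
    (hy : BlockConst b ℓ v (Function.update x i₀ v) j) :
    constBlocks b ℓ v x ⊂ constBlocks b ℓ v (Function.update x i₀ v) :=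
  ssubset_of_subset_of_ne (constBlocks_subset_update hi₀ hx v) fun h =>
    hx <| by
      have : j ∈ constBlocks b ℓ v (Function.update x i₀ v) := by simpa [constBlocks] using hy
      rw [← h] at this
      simpa [constBlocks] using this

theorem disjoint_constBlocks (hℓ : 1 ≤ ℓ) (x : Fin (b * ℓ) → Bool) :
    Disjoint (constBlocks b ℓ true x) (constBlocks b ℓ false x) := by
  refine disjoint_left.2 fun j h₁ h₀ => ?_
  simp only [constBlocks, mem_filter, mem_univ, true_and] at h₁ h₀
  obtain ⟨i, hi⟩ := exists_mem_block hℓ j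
  simpa [h₁ i hi] using h₀ i hi

theorem oneRoyalRoad_add_zeroRoyalRoad_le (hℓ : 1 ≤ ℓ) (x : Fin (b * ℓ) → Bool) :
    oneRoyalRoad b ℓ x + zeroRoyalRoad b ℓ x ≤ ℓ * b := by
  rw [oneRoyalRoad_eq, zeroRoyalRoad_eq, ← mul_add,
    ← card_union_of_disjoint (disjoint_constBlocks hℓ x)]
  exact Nat.mul_le_mul_left ℓ (card_le_univ _ |>.trans_eq (Fintype.card_fin b))

theorem paretoOptimal_of_forall_blockConst (hℓ : 1 ≤ ℓ) {x : Fin (b * ℓ) → Bool}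
    (hx : ∀ j, BlockConst b ℓ true x j ∨ BlockConst b ℓ false x j) :
    paretoOptimal (oneRoyalRoad b ℓ) (zeroRoyalRoad b ℓ) x := by
  have hunion : constBlocks b ℓ true x ∪ constBlocks b ℓ false x = univ :=
    eq_univ_of_forall fun j => by simpa [constBlocks] using hx j
  have hsum : oneRoyalRoad b ℓ x + zeroRoyalRoad b ℓ x = ℓ * b := by
    rw [oneRoyalRoad_eq, zeroRoyalRoad_eq, ← mul_add,
      ← card_union_of_disjoint (disjoint_constBlocks hℓ x), hunion, card_univ, Fintype.card_fin]
  rintro y ⟨h₁, h₂, hlt⟩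
  have := oneRoyalRoad_add_zeroRoyalRoad_le hℓ y
  omega

theorem dominates_update_of_blockConst (hℓ : 1 ≤ ℓ) {x : Fin (b * ℓ) → Bool}
    {i₀ : Fin (b * ℓ)} {j : Fin b} (hi₀ : (i₀ : ℕ) / ℓ = j) {v : Bool} (hv : ¬ BlockConst b ℓ v x j)
    (hnv : ¬ BlockConst b ℓ (!v) x j) (hy : BlockConst b ℓ v (Function.update x i₀ v) j) :
    dominates (oneRoyalRoad b ℓ) (zeroRoyalRoad b ℓ) (Function.update x i₀ v) x := by
  have hlt := Nat.mul_lt_mul_of_pos_left (card_lt_card (constBlocks_ssubset_update hi₀ hv hy)) hℓ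
  have hle := Nat.mul_le_mul_left ℓ (card_le_card (constBlocks_subset_update hi₀ hnv v))
  simp only [dominates, oneRoyalRoad_eq, zeroRoyalRoad_eq]
  cases v
  · exact ⟨hle, hlt.le, Or.inr hlt⟩
  · exact ⟨hlt.le, hle, Or.inl hlt⟩

theorem exists_update_blockConst_of_card_eq_one {x : Fin (b * ℓ) → Bool} {j : Fin b} {w : Bool}
    (h : #(univ.filter fun i : Fin (b * ℓ) => (i : ℕ) / ℓ = j ∧ x i = w) = 1) :
    ∃ i₀ : Fin (b * ℓ), (i₀ : ℕ) / ℓ = j ∧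
      BlockConst b ℓ (!w) (Function.update x i₀ (!w)) j := by
  obtain ⟨i₀, hs⟩ := card_eq_one.1 h
  have hi₀ : (i₀ : ℕ) / ℓ = j := by
    simpa using (mem_filter.1 (hs.symm ▸ mem_singleton_self i₀)).2.1
  refine ⟨i₀, hi₀, fun i hi => ?_⟩
  by_cases hii₀ : i = i₀
  · simp [hii₀]
  · rw [Function.update_of_ne hii₀]
    have : i ∉ univ.filter fun i : Fin (b * ℓ) => (i : ℕ) / ℓ = j ∧ x i = w := by
      simpa [hs] using hii₀
    simpa [hi, Bool.eq_not] using this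

theorem exists_update_blockConst_of_mixed (hℓ : ℓ ≤ 3) {x : Fin (b * ℓ) → Bool} {j : Fin b}
    (h₁ : ¬ BlockConst b ℓ true x j) (h₀ : ¬ BlockConst b ℓ false x j) :
    ∃ (v : Bool) (i₀ : Fin (b * ℓ)), (i₀ : ℕ) / ℓ = j ∧
      BlockConst b ℓ v (Function.update x i₀ v) j := by
  simp only [BlockConst, not_forall, exists_prop] at h₁ h₀
  obtain ⟨i₁, hi₁, hx₁⟩ := h₀
  obtain ⟨i₀, hi₀, hx₀⟩ := h₁
  have hzeros : 0 < blockZeros b ℓ x j := card_pos.2 ⟨i₀, by simpa [hi₀] using hx₀⟩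
  have hones : 0 < blockOnes b ℓ x j := card_pos.2 ⟨i₁, by simpa [hi₁] using hx₁⟩
  have := blockZeros_add_blockOnes_le x j
  rcases (by omega : blockZeros b ℓ x j = 1 ∨ blockOnes b ℓ x j = 1) with h | h
  · exact ⟨true, exists_update_blockConst_of_card_eq_one h⟩
  · exact ⟨false, exists_update_blockConst_of_card_eq_one h⟩

end Blocks

theorem ORZR_no_local_opts_general (b ℓ : ℕ) (hℓ1 : 1 ≤ ℓ) (hℓ3 : ℓ ≤ 3)
    (x : Fin (b * ℓ) → Bool)
    (hx : ¬ paretoOptimal (oneRoyalRoad b ℓ) (zeroRoyalRoad b ℓ) x) :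
    ∃ y, hammingDist y x = 1 ∧ dominates (oneRoyalRoad b ℓ) (zeroRoyalRoad b ℓ) y x := by
  obtain ⟨j, h₁, h₀⟩ : ∃ j, ¬ BlockConst b ℓ true x j ∧ ¬ BlockConst b ℓ false x j := by
    by_contra! h
    exact hx (paretoOptimal_of_forall_blockConst hℓ1 fun j => or_iff_not_imp_left.2 (h j))
  obtain ⟨v, i₀, hi₀, hy⟩ := exists_update_blockConst_of_mixed hℓ3 h₁ h₀
  have hv : ¬ BlockConst b ℓ v x j := by cases v <;> assumption
  have hnv : ¬ BlockConst b ℓ (!v) x j := by cases v <;> assumption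
  have hflip : v ≠ x i₀ := fun h => hv (by rwa [h, Function.update_eq_self, ← h] at hy)
  exact ⟨_, hammingDist_update_self x i₀ hflip,
    dominates_update_of_blockConst hℓ1 hi₀ hv hnv hy⟩

/-- For ORZR with b > 1 and block length ℓ ≤ 3, there are no non-global Pareto
local optima: every non-Pareto-optimal bit-string is dominated by some bit-string at Hamming
distance exactly 1 from it. -/
theorem ORZR_no_local_opts (b ℓ : ℕ) (hb : 1 < b) (hℓ1 : 1 ≤ ℓ) (hℓ3 : ℓ ≤ 3)
    (x : Fin (b * ℓ) → Bool)
    (hx : ¬ paretoOptimal (oneRoyalRoad b ℓ) (zeroRoyalRoad b ℓ) x) :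
    ∃ y, hammingDist y x = 1 ∧ dominates (oneRoyalRoad b ℓ) (zeroRoyalRoad b ℓ) y x :=
  ORZR_no_local_opts_general b ℓ hℓ1 hℓ3 x hx
end

section
/- For the bi-objective problem LOZJ with f1 = LeadingOnes and f2 = ZeroJump_k on bit-strings of length n, where k is an integer with 1 < k < n/2, the Pareto set equals exactly {0^n} ∪ { 1^i 0^{n−i} : i ∈ {k, k+1, …, n} }, i.e. the all-zeros string together with the strings consisting of i leading ones followed by n−i zeros for each i from k to n. -/
open Finset

/-!
Both objectives are controlled by the number of one-bits: `leadingOnes x ≤ |x|₁`, and outside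
the jump region `ZeroJump_k x = k + |x|₀`, while inside it (`0 < |x|₁ < k`)
`ZeroJump_k x = |x|₁ < k`. Hence `leadingOnes + ZeroJump_k ≤ n + k`, with equality at every
`1^i 0^(n-i)`, `k ≤ i`; these are Pareto optimal, and so is `0^n`, the unique maximiser of
`ZeroJump_k`. Conversely a nonzero `x` with fewer than `k` one-bits is dominated by
`1^k 0^(n-k)`, and any other `x` whose one-bits are not all leading is dominated by the string
obtained by moving its one-bits to the front.
-/

def prefixOnes (n i : ℕ) : Fin n → Bool := fun j => decide ((j : ℕ) < i)

section Dominance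

variable {n : ℕ} {f₁ f₂ : (Fin n → Bool) → ℕ} {x : Fin n → Bool}

theorem paretoOptimal_of_forall_add_le (h : ∀ y, f₁ y + f₂ y ≤ f₁ x + f₂ x) :
    paretoOptimal f₁ f₂ x := by
  rintro y ⟨h₁, h₂, hlt⟩
  have := h y
  omega

theorem paretoOptimal_of_forall_ne_snd_lt (h : ∀ y, y ≠ x → f₂ y < f₂ x) :
    paretoOptimal f₁ f₂ x := by
  rintro y ⟨h₁, h₂, hlt⟩
  obtain rfl : y = x := by
    by_contra hne
    exact (h y hne).not_ge h₂
  omega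

end Dominance

section BitCounts

variable {n : ℕ}

theorem onesCount_add_zerosCount (x : Fin n → Bool) : onesCount x + zerosCount x = n := by
  simpa [onesCount, zerosCount] using
    card_filter_add_card_filter_not (s := univ) fun i => x i = true

theorem onesCount_eq_zero_iff {x : Fin n → Bool} : onesCount x = 0 ↔ x = fun _ => false := by
  simp [onesCount, filter_eq_empty_iff, funext_iff]

theorem lt_leadingOnes_iff (x : Fin n → Bool) (i : Fin n) :
    (i : ℕ) < leadingOnes x ↔ ∀ j, j ≤ i → x j = true :=
  Fin.lt_card_filter_univ_iff_apply_of_imp _ fun _ _ hba ha j hj => ha j (hj.trans hba)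

theorem leadingOnes_le_onesCount (x : Fin n → Bool) : leadingOnes x ≤ onesCount x :=
  card_le_card fun i hi => by
    simp only [mem_filter, mem_univ, true_and] at hi ⊢
    exact hi i le_rfl

theorem eq_prefixOnes_of_leadingOnes_eq_onesCount {x : Fin n → Bool}
    (h : leadingOnes x = onesCount x) : x = prefixOnes n (leadingOnes x) := by
  have hsets : univ.filter (fun i => ∀ j, j ≤ i → x j = true) = univ.filter (x · = true) :=
    eq_of_subset_of_card_le (fun i hi => by
      simp only [mem_filter, mem_univ, true_and] at hi ⊢
      exact hi i le_rfl) h.ge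
  funext i
  have hi := congrArg (i ∈ ·) hsets
  simp only [mem_filter, mem_univ, true_and, eq_iff_iff] at hi
  rw [prefixOnes, Bool.eq_iff_iff, decide_eq_true_iff, lt_leadingOnes_iff, hi]

theorem onesCount_prefixOnes {i : ℕ} (hi : i ≤ n) : onesCount (prefixOnes n i) = i := by
  simp [onesCount, prefixOnes, Fin.card_filter_val_lt, hi]

theorem zerosCount_prefixOnes {i : ℕ} (hi : i ≤ n) : zerosCount (prefixOnes n i) = n - i := by
  have := onesCount_add_zerosCount (prefixOnes n i)
  rw [onesCount_prefixOnes hi] at this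
  omega

theorem leadingOnes_prefixOnes {i : ℕ} (hi : i ≤ n) : leadingOnes (prefixOnes n i) = i := by
  refine le_antisymm ((leadingOnes_le_onesCount _).trans (onesCount_prefixOnes hi).le) ?_
  calc i = #{j : Fin n | j < i} := by rw [Fin.card_filter_val_lt, min_eq_right hi]
    _ ≤ leadingOnes (prefixOnes n i) := card_le_card fun a ha => ?_
  simp only [mem_filter, mem_univ, true_and, prefixOnes, decide_eq_true_iff] at ha ⊢
  exact fun j hj => lt_of_le_of_lt (Fin.le_def.mp hj) ha

end BitCounts

section ZeroJump

variable {n k : ℕ} {x : Fin n → Bool}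

theorem zeroJump_of_zerosCount_le (h : zerosCount x ≤ n - k) :
    zeroJump n k x = k + zerosCount x :=
  if_pos (Or.inl h)

theorem zeroJump_eq_onesCount (h : n - k < zerosCount x) (hx : x ≠ fun _ => false) :
    zeroJump n k x = onesCount x := by
  rw [zeroJump, if_neg (not_or.mpr ⟨by omega, hx⟩)]
  have := onesCount_add_zerosCount x
  omega

theorem zeroJump_false : zeroJump n k (fun _ => false) = k + n := by
  simp [zeroJump, zerosCount]

theorem zeroJump_le_add (x : Fin n → Bool) : zeroJump n k x ≤ k + n := by
  have := onesCount_add_zerosCount x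
  unfold zeroJump
  split_ifs <;> omega

theorem eq_false_of_zeroJump_eq (h : zeroJump n k x = k + n) : x = fun _ => false := by
  have hsum := onesCount_add_zerosCount x
  unfold zeroJump at h
  split_ifs at h with hcase
  · rcases hcase with _ | hx
    · exact onesCount_eq_zero_iff.mp (by omega)
    · exact hx
  · omega

theorem zeroJump_prefixOnes {i : ℕ} (hki : k ≤ i) (hin : i ≤ n) :
    zeroJump n k (prefixOnes n i) = k + (n - i) := by
  rw [zeroJump_of_zerosCount_le] <;> rw [zerosCount_prefixOnes hin]
  omega

theorem leadingOnes_add_zeroJump_le (hkn : k ≤ n) (x : Fin n → Bool) :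
    leadingOnes x + zeroJump n k x ≤ n + k := by
  have hlo := leadingOnes_le_onesCount x
  have hsum := onesCount_add_zerosCount x
  by_cases hz : zerosCount x ≤ n - k
  · rw [zeroJump_of_zerosCount_le hz]
    omega
  by_cases hx : x = fun _ => false
  · have := onesCount_eq_zero_iff.mpr hx
    have := zeroJump_le_add (k := k) x
    omega
  · rw [zeroJump_eq_onesCount (not_le.mp hz) hx]
    omega

end ZeroJump

section LOZJ

variable {n k : ℕ}

theorem paretoOptimal_false : paretoOptimal leadingOnes (zeroJump n k) fun _ => false :=
  paretoOptimal_of_forall_ne_snd_lt fun y hy => by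
    rw [zeroJump_false]
    exact (zeroJump_le_add y).lt_of_ne (mt eq_false_of_zeroJump_eq hy)

theorem paretoOptimal_prefixOnes (hkn : k ≤ n) {i : ℕ} (hki : k ≤ i) (hin : i ≤ n) :
    paretoOptimal leadingOnes (zeroJump n k) (prefixOnes n i) :=
  paretoOptimal_of_forall_add_le fun y => by
    rw [leadingOnes_prefixOnes hin, zeroJump_prefixOnes hki hin]
    have := leadingOnes_add_zeroJump_le hkn y
    omega

theorem dominates_prefixOnes_of_onesCount_lt (hkn : k ≤ n) {x : Fin n → Bool}
    (hx : x ≠ fun _ => false) (h : onesCount x < k) :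
    dominates leadingOnes (zeroJump n k) (prefixOnes n k) x := by
  have hsum := onesCount_add_zerosCount x
  have hlo := leadingOnes_le_onesCount x
  rw [dominates, leadingOnes_prefixOnes hkn, zeroJump_prefixOnes le_rfl hkn,
    zeroJump_eq_onesCount (by omega) hx]
  omega

theorem dominates_prefixOnes_onesCount {x : Fin n → Bool} (hz : zerosCount x ≤ n - k)
    (h : leadingOnes x < onesCount x) :
    dominates leadingOnes (zeroJump n k) (prefixOnes n (onesCount x)) x := by
  have hsum := onesCount_add_zerosCount x
  have hzeros : zerosCount (prefixOnes n (onesCount x)) = zerosCount x := by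
    rw [zerosCount_prefixOnes (by omega)]
    omega
  have hzj : zeroJump n k (prefixOnes n (onesCount x)) = zeroJump n k x := by
    rw [zeroJump_of_zerosCount_le hz, zeroJump_of_zerosCount_le (hzeros ▸ hz), hzeros]
  rw [dominates, leadingOnes_prefixOnes (by omega), hzj]
  omega

end LOZJ

theorem LOZJ_pareto_set_general (n k : ℕ) (hkn : 2 * k < n) (x : Fin n → Bool) :
    paretoOptimal leadingOnes (zeroJump n k) x ↔
      x = (fun _ => false) ∨
        ∃ i : ℕ, k ≤ i ∧ i ≤ n ∧ x = (fun j : Fin n => decide ((j : ℕ) < i)) := by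
  have hkn' : k ≤ n := by omega
  constructor
  · intro hx
    by_cases hx0 : x = fun _ => false
    · exact Or.inl hx0
    have hones : k ≤ onesCount x := by
      by_contra! h
      exact hx _ (dominates_prefixOnes_of_onesCount_lt hkn' hx0 h)
    have hsum := onesCount_add_zerosCount x
    have hlo : leadingOnes x = onesCount x := by
      by_contra h
      exact hx _ (dominates_prefixOnes_onesCount (by omega)
        ((leadingOnes_le_onesCount x).lt_of_ne h))
    exact Or.inr
      ⟨leadingOnes x, by omega, by omega, eq_prefixOnes_of_leadingOnes_eq_onesCount hlo⟩
  · rintro (rfl | ⟨i, hki, hin, rfl⟩)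
    · exact paretoOptimal_false
    · exact paretoOptimal_prefixOnes hkn' hki hin

/-- For LOZJ (f1 = LeadingOnes, f2 = ZeroJump_k) with 1 < k < n/2, the Pareto set
is exactly {0^n} ∪ { 1^i 0^{n-i} : k ≤ i ≤ n }. -/
theorem LOZJ_pareto_set (n k : ℕ) (hk : 1 < k) (hkn : 2 * k < n) (x : Fin n → Bool) :
    paretoOptimal leadingOnes (zeroJump n k) x ↔
      x = (fun _ => false) ∨
        ∃ i : ℕ, k ≤ i ∧ i ≤ n ∧ x = (fun j : Fin n => decide ((j : ℕ) < i)) :=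
  LOZJ_pareto_set_general n k hkn x
end

section
/- For the bi-objective problem LOZR with f1 = LeadingOnes and f2 = ZeroRoyalRoad on bit-strings of length n = b·ℓ (b > 1), the Pareto set equals exactly { 1^{iℓ} 0^{n−iℓ} : i ∈ {0, 1, …, b} }, i.e. the strings consisting of i·ℓ leading ones followed by (b−i)·ℓ zeros for each i from 0 to b. -/
open Finset

section LOZRAux

lemma card_filter_lt_fin (n m : ℕ) (h : m ≤ n) :
    (univ.filter fun k : Fin n => (k:ℕ) < m).card = m := by
  have : (univ.filter fun k : Fin n => (k:ℕ) < m) = Finset.map (Fin.castLEEmb h) univ := by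
    ext k
    simp only [mem_filter, mem_univ, true_and, Finset.mem_map, Fin.castLEEmb, Fin.castLE]
    constructor
    · intro hk; exact ⟨⟨k, hk⟩, rfl⟩
    · rintro ⟨a, rfl⟩; exact a.2
  rw [this, Finset.card_map, Finset.card_univ, Fintype.card_fin]

lemma card_filter_ge_fin (n m : ℕ) (h : m ≤ n) :
    (univ.filter fun k : Fin n => m ≤ (k:ℕ)).card = n - m := by
  have h2 := Finset.card_filter_add_card_filter_not
    (s := (univ : Finset (Fin n))) (p := fun k : Fin n => (k:ℕ) < m)
  simp only [not_lt] at h2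
  rw [card_filter_lt_fin n m h] at h2
  simp only [Finset.card_univ, Fintype.card_fin] at h2
  omega

lemma card_block (b ℓ : ℕ) (hℓ : 1 ≤ ℓ) (j : Fin b) :
    (univ.filter fun p : Fin (b*ℓ) => (p:ℕ)/ℓ = (j:ℕ)).card = ℓ := by
  have key : (univ.filter fun p : Fin (b*ℓ) => (p:ℕ)/ℓ = (j:ℕ)).card
      = (univ : Finset (Fin ℓ)).card := by
    refine Finset.card_nbij' (fun p => (⟨(p:ℕ) % ℓ, Nat.mod_lt _ hℓ⟩ : Fin ℓ))
      (fun k => (⟨(j:ℕ)*ℓ + (k:ℕ), by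
        calc (j:ℕ)*ℓ + (k:ℕ) < (j:ℕ)*ℓ + ℓ := by omega
        _ = ((j:ℕ)+1)*ℓ := by ring
        _ ≤ b*ℓ := Nat.mul_le_mul_right ℓ j.2⟩ : Fin (b*ℓ))) ?_ ?_ ?_ ?_
    · intro p hp; simp
    · intro k hk
      simp only [mem_coe, mem_filter, mem_univ, true_and, Fin.val_mk]
      rw [Nat.add_comm, Nat.add_mul_div_right _ _ (show 0 < ℓ by omega),
        Nat.div_eq_of_lt k.2, Nat.zero_add]
    · intro p hp
      simp only [mem_coe, mem_filter, mem_univ, true_and] at hp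
      ext
      simp only []
      rw [← hp, Nat.mul_comm]
      exact Nat.div_add_mod _ _
    · intro k hk
      ext
      simp only []
      rw [Nat.add_comm, Nat.add_mul_mod_self_right, Nat.mod_eq_of_lt k.2]
  simpa using key

lemma mem_lo_iff {n : ℕ} (x : Fin n → Bool) (k : Fin n) :
    (∀ j : Fin n, j ≤ k → x j = true) ↔ (k : ℕ) < leadingOnes x := by
  constructor
  · intro h
    have hs : Finset.Iic k ⊆ univ.filter fun i : Fin n => ∀ j : Fin n, j ≤ i → x j = true := by
      intro m hm
      simp only [Finset.mem_Iic] at hm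
      simp only [mem_filter, mem_univ, true_and]
      intro j hj; exact h j (le_trans hj hm)
    have := Finset.card_le_card hs
    rw [Fin.card_Iic] at this
    unfold leadingOnes; omega
  · intro h
    by_contra hc
    push_neg at hc
    have hs : (univ.filter fun i : Fin n => ∀ j : Fin n, j ≤ i → x j = true) ⊆ Finset.Iio k := by
      intro m hm
      simp only [mem_filter, mem_univ, true_and] at hm
      simp only [Finset.mem_Iio]
      by_contra hmk
      push_neg at hmk
      obtain ⟨j, hj, hjx⟩ := hc
      exact hjx (hm j (le_trans hj hmk))
    have := Finset.card_le_card hs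
    rw [Fin.card_Iio] at this
    unfold leadingOnes at h; omega

lemma lo_true {n : ℕ} (x : Fin n → Bool) (k : Fin n) (h : (k:ℕ) < leadingOnes x) :
    x k = true := ((mem_lo_iff x k).2 h) k le_rfl

lemma lo_le {n : ℕ} (x : Fin n → Bool) : leadingOnes x ≤ n := by
  have := Finset.card_filter_le (univ : Finset (Fin n))
    (fun i : Fin n => ∀ j : Fin n, j ≤ i → x j = true)
  simpa [leadingOnes] using this

lemma lo_canonical (b ℓ i : ℕ) (hi : i ≤ b) :
    leadingOnes (fun j : Fin (b*ℓ) => decide ((j:ℕ) < i*ℓ)) = i*ℓ := by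
  set x : Fin (b*ℓ) → Bool := fun j : Fin (b*ℓ) => decide ((j:ℕ) < i*ℓ) with hx
  have hiℓ : i*ℓ ≤ b*ℓ := Nat.mul_le_mul_right ℓ hi
  have hL : leadingOnes x ≤ b*ℓ := lo_le x
  rcases lt_trichotomy (leadingOnes x) (i*ℓ) with hlt | heq | hgt
  · exfalso
    set k : Fin (b*ℓ) := ⟨leadingOnes x, lt_of_lt_of_le hlt hiℓ⟩ with hk
    have : ∀ j : Fin (b*ℓ), j ≤ k → x j = true := by
      intro j hj
      have : (j:ℕ) < i*ℓ := lt_of_le_of_lt hj hlt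
      simp [hx, this]
    have := (mem_lo_iff x k).1 this
    simp [hk] at this
  · exact heq
  · exfalso
    set k : Fin (b*ℓ) := ⟨i*ℓ, lt_of_lt_of_le hgt hL⟩ with hk
    have h2 := (mem_lo_iff x k).2 (by simp [hk]; omega) k le_rfl
    simp [hx, hk] at h2

lemma zeros_canonical (b ℓ i : ℕ) (hℓ : 1 ≤ ℓ) (j : Fin b) :
    blockAllZeros b ℓ (fun p : Fin (b*ℓ) => decide ((p:ℕ) < i*ℓ)) j ↔ i ≤ (j:ℕ) := by
  constructor
  · intro h
    have hjl : (j:ℕ)*ℓ < b*ℓ := mul_lt_mul_of_pos_right j.2 (by omega)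
    have h2 := h ⟨(j:ℕ)*ℓ, hjl⟩ (by simp [Nat.mul_div_cancel _ (show 0 < ℓ by omega)])
    simp only [decide_eq_false_iff_not, not_lt] at h2
    exact Nat.le_of_mul_le_mul_right h2 (by omega)
  · intro h p hp
    simp only [decide_eq_false_iff_not, not_lt]
    calc i*ℓ ≤ (j:ℕ)*ℓ := Nat.mul_le_mul_right ℓ h
    _ = ((p:ℕ)/ℓ)*ℓ := by rw [hp]
    _ ≤ (p:ℕ) := Nat.div_mul_le_self _ _

lemma zrr_canonical (b ℓ i : ℕ) (hℓ : 1 ≤ ℓ) (hi : i ≤ b) :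
    zeroRoyalRoad b ℓ (fun p : Fin (b*ℓ) => decide ((p:ℕ) < i*ℓ)) = ℓ * (b - i) := by
  unfold zeroRoyalRoad
  congr 1
  rw [← card_filter_ge_fin b i hi]
  congr 1
  ext j
  simp only [mem_filter, mem_univ, true_and]
  exact zeros_canonical b ℓ i hℓ j

lemma all_zero_block_ge (b ℓ : ℕ) (hℓ : 1 ≤ ℓ) (x : Fin (b*ℓ) → Bool) (j : Fin b)
    (h : blockAllZeros b ℓ x j) : leadingOnes x ≤ (j:ℕ)*ℓ := by
  have hjl : (j:ℕ)*ℓ < b*ℓ := mul_lt_mul_of_pos_right j.2 (by omega)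
  have h2 := h ⟨(j:ℕ)*ℓ, hjl⟩ (by simp [Nat.mul_div_cancel _ (show 0 < ℓ by omega)])
  by_contra hc
  push_neg at hc
  have := lo_true x ⟨(j:ℕ)*ℓ, hjl⟩ hc
  rw [h2] at this
  exact Bool.false_ne_true this

lemma sum_bound (b ℓ : ℕ) (hℓ : 1 ≤ ℓ) (x : Fin (b*ℓ) → Bool) :
    leadingOnes x + zeroRoyalRoad b ℓ x ≤ b*ℓ := by
  set Z : Finset (Fin b) := univ.filter fun j : Fin b => blockAllZeros b ℓ x j with hZ
  set T : Finset (Fin (b*ℓ)) :=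
    Z.biUnion (fun j => univ.filter fun p : Fin (b*ℓ) => (p:ℕ)/ℓ = (j:ℕ)) with hT
  have hdisj : ∀ j ∈ Z, ∀ j' ∈ Z, j ≠ j' →
      Disjoint (univ.filter fun p : Fin (b*ℓ) => (p:ℕ)/ℓ = (j:ℕ))
        (univ.filter fun p : Fin (b*ℓ) => (p:ℕ)/ℓ = (j':ℕ)) := by
    intro j _ j' _ hne
    rw [Finset.disjoint_left]
    intro p hp hp'
    simp only [mem_filter, mem_univ, true_and] at hp hp'
    exact hne (Fin.ext (hp ▸ hp'))
  have hcard : T.card = Z.card * ℓ := by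
    rw [hT, Finset.card_biUnion hdisj]
    rw [Finset.sum_congr rfl (fun j _ => card_block b ℓ hℓ j), Finset.sum_const, smul_eq_mul]
  have hsub : T ⊆ univ.filter fun p : Fin (b*ℓ) => leadingOnes x ≤ (p:ℕ) := by
    intro p hp
    rw [hT, Finset.mem_biUnion] at hp
    obtain ⟨j, hjZ, hpj⟩ := hp
    simp only [hZ, mem_filter, mem_univ, true_and] at hjZ hpj
    simp only [mem_filter, mem_univ, true_and]
    by_contra hc
    push_neg at hc
    have h1 := lo_true x p hc
    have h2 := hjZ p hpj
    rw [h2] at h1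
    exact Bool.false_ne_true h1
  have hle := Finset.card_le_card hsub
  rw [hcard, card_filter_ge_fin (b*ℓ) (leadingOnes x) (lo_le x)] at hle
  have hlon : leadingOnes x ≤ b*ℓ := lo_le x
  have h3 : Z.card * ℓ + leadingOnes x ≤ b*ℓ := (Nat.le_sub_iff_add_le hlon).1 hle
  show leadingOnes x + ℓ * Z.card ≤ b*ℓ
  rw [mul_comm ℓ]
  linarith

end LOZRAux


/-- For LOZR (f1 = LeadingOnes, f2 = ZeroRoyalRoad) on bit-strings of length
n = b·ℓ with b > 1, the Pareto set is exactly { 1^{iℓ} 0^{n-iℓ} : 0 ≤ i ≤ b }. -/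
theorem LOZR_pareto_set (b ℓ : ℕ) (hb : 1 < b) (hℓ : 1 ≤ ℓ) (x : Fin (b * ℓ) → Bool) :
    paretoOptimal leadingOnes (zeroRoyalRoad b ℓ) x ↔
      ∃ i : ℕ, i ≤ b ∧ x = (fun j : Fin (b * ℓ) => decide ((j : ℕ) < i * ℓ)) := by
  constructor
  · intro hP
    set Z : Finset (Fin b) := univ.filter (fun j : Fin b => blockAllZeros b ℓ x j) with hZ
    have hz : Z.card ≤ b := by
      have := Finset.card_le_univ Z
      simpa using this
    set i : ℕ := b - Z.card with hi
    have hib : i ≤ b := Nat.sub_le _ _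
    set y : Fin (b*ℓ) → Bool := fun p : Fin (b*ℓ) => decide ((p:ℕ) < i*ℓ) with hy
    have h1 : leadingOnes y = i*ℓ := lo_canonical b ℓ i hib
    have h2 : zeroRoyalRoad b ℓ y = ℓ * Z.card := by
      rw [hy, zrr_canonical b ℓ i hℓ hib, hi, Nat.sub_sub_self hz]
    have hzx : zeroRoyalRoad b ℓ x = ℓ * Z.card := rfl
    have hsum := sum_bound b ℓ hℓ x
    have hL : leadingOnes x ≤ i*ℓ := by
      rw [hi, Nat.sub_mul]
      refine Nat.le_sub_of_add_le ?_
      rw [mul_comm (Z.card)]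
      linarith
    have hnd := hP y
    simp only [dominates, not_and, not_or, not_lt] at hnd
    have hA : leadingOnes x ≤ leadingOnes y := by rw [h1]; exact hL
    have hB : zeroRoyalRoad b ℓ x ≤ zeroRoyalRoad b ℓ y := by rw [h2, hzx]
    have hC := hnd hA hB
    have hLe : leadingOnes x = i*ℓ := le_antisymm hL (h1 ▸ hC.1)
    refine ⟨i, hib, funext fun p => ?_⟩
    by_cases cp : (p:ℕ) < i*ℓ
    · have hx : x p = true := lo_true x p (by rw [hLe]; exact cp)
      rw [hx]
      simp [cp]
    · have hpl : (p:ℕ)/ℓ < b := (Nat.div_lt_iff_lt_mul (show 0 < ℓ by omega)).2 p.2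
      set j : Fin b := ⟨(p:ℕ)/ℓ, hpl⟩ with hj
      have hZeq : Z = univ.filter fun j' : Fin b => i ≤ (j':ℕ) := by
        apply Finset.eq_of_subset_of_card_le
        · intro j' hj'
          simp only [hZ, mem_filter, mem_univ, true_and] at hj' ⊢
          have hth := all_zero_block_ge b ℓ hℓ x j' hj'
          rw [hLe] at hth
          exact Nat.le_of_mul_le_mul_right hth (by omega)
        · rw [card_filter_ge_fin b i hib, hi, Nat.sub_sub_self hz]
      have hjZ : j ∈ Z := by
        rw [hZeq]
        simp only [mem_filter, mem_univ, true_and, hj]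
        rw [Nat.le_div_iff_mul_le (show 0 < ℓ by omega)]
        exact Nat.le_of_not_lt cp
      have hbz : blockAllZeros b ℓ x j := by
        rw [hZ] at hjZ
        simpa using hjZ
      have hxp : x p = false := hbz p rfl
      rw [hxp]
      simp [cp]
  · rintro ⟨i, hib, rfl⟩
    intro y hy
    obtain ⟨k, hk⟩ := Nat.le.dest hib
    have h1 : leadingOnes (fun j : Fin (b*ℓ) => decide ((j:ℕ) < i*ℓ)) = i*ℓ :=
      lo_canonical b ℓ i hib
    have h2 : zeroRoyalRoad b ℓ (fun j : Fin (b*ℓ) => decide ((j:ℕ) < i*ℓ)) = ℓ*(b - i) :=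
      zrr_canonical b ℓ i hℓ hib
    have hbk : b - i = k := by omega
    have hsum := sum_bound b ℓ hℓ y
    have hble : b*ℓ = i*ℓ + k*ℓ := by rw [← Nat.add_mul, hk]
    obtain ⟨hA, hB, hC⟩ := hy
    rw [h1] at hA
    rw [h2, hbk] at hB
    rw [h1, h2, hbk] at hC
    have hc2 : ℓ*k = k*ℓ := mul_comm _ _
    rcases hC with hC | hC
    · linarith
    · linarith
end

section
/- For the bi-objective problem OJZR with f1 = OneJump_k and f2 = ZeroRoyalRoad on bit-strings of length n = b·ℓ, where b > 1, k is an integer with 1 < k < n/2 and ℓ < k, and (n−k) mod ℓ > 0, the Pareto set equals exactly {1^n} ∪ { x : |x|_1 < n−k and every block of x is an all-ones block or an all-zeros block } ∪ { x : |x|_1 = n−k and the number of all-zeros blocks of x equals ⌊k/ℓ⌋ }. -/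
open Finset

lemma ones_add_zeros {n : ℕ} (x : Fin n → Bool) : onesCount x + zerosCount x = n := by
  unfold onesCount zerosCount
  have := Finset.card_filter_add_card_filter_not (s := (Finset.univ : Finset (Fin n))) (p := fun i => x i = true)
  simp only [Finset.card_univ, Fintype.card_fin] at this
  simp only [Bool.not_eq_true] at this
  exact this

lemma onesCount_le {n : ℕ} (x : Fin n → Bool) : onesCount x ≤ n := by
  have := ones_add_zeros x; omega

lemma zerosCount_eq {n : ℕ} (x : Fin n → Bool) : zerosCount x = n - onesCount x := by
  have := ones_add_zeros x; omega

lemma onesCount_true {n : ℕ} : onesCount (fun _ : Fin n => true) = n := by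
  unfold onesCount; simp

lemma onesCount_eq_iff {n : ℕ} (x : Fin n → Bool) : onesCount x = n ↔ x = fun _ => true := by
  constructor
  · intro h
    funext i
    have : (Finset.univ.filter fun i => x i = true) = Finset.univ := by
      apply Finset.eq_univ_of_card; simpa [onesCount] using h
    have hi : i ∈ Finset.univ.filter fun i => x i = true := by rw [this]; exact Finset.mem_univ i
    simpa using (Finset.mem_filter.mp hi).2
  · rintro rfl; exact onesCount_true
lemma div_lt_b {b ℓ : ℕ} (hℓ : 0 < ℓ) (i : Fin (b * ℓ)) : (i : ℕ) / ℓ < b :=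
  (Nat.div_lt_iff_lt_mul hℓ).mpr (by have := i.isLt; omega)

lemma card_filter_fiber (b ℓ : ℕ) (hℓ : 0 < ℓ) (p : Fin (b * ℓ) → Prop) [DecidablePred p] :
    (Finset.univ.filter p).card
      = ∑ j : Fin b, (Finset.univ.filter fun i : Fin (b * ℓ) => (i : ℕ) / ℓ = (j : ℕ) ∧ p i).card := by
  rw [Finset.card_eq_sum_card_fiberwise (s := ((Finset.univ : Finset (Fin (b * ℓ))).filter p))
    (f := fun i : Fin (b * ℓ) => (⟨(i : ℕ) / ℓ, div_lt_b hℓ i⟩ : Fin b)) (t := Finset.univ)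
    (fun i _ => Finset.mem_univ _)]
  apply Finset.sum_congr rfl
  intro j _
  rw [Finset.filter_filter]
  apply Finset.card_nbij id (by intro i hi; simpa [Fin.ext_iff, and_comm] using hi)
    (Function.injective_id.injOn)
  intro i hi
  simpa [Fin.ext_iff, and_comm] using hi

lemma block_card (b ℓ : ℕ) (hℓ : 0 < ℓ) (j : Fin b) :
    (Finset.univ.filter fun i : Fin (b * ℓ) => (i : ℕ) / ℓ = (j : ℕ)).card = ℓ := by
  have hjb : (j : ℕ) < b := j.isLt
  have key : (Finset.univ.filter fun i : Fin (b * ℓ) => (i : ℕ) / ℓ = (j : ℕ)).card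
      = (Finset.univ : Finset (Fin ℓ)).card := by
    apply Finset.card_bij
      (i := fun (i : Fin (b * ℓ)) (_ : i ∈ Finset.univ.filter fun i : Fin (b * ℓ) => (i : ℕ) / ℓ = (j : ℕ)) =>
        (⟨(i : ℕ) % ℓ, Nat.mod_lt _ hℓ⟩ : Fin ℓ))
    · intro i _; exact Finset.mem_univ _
    · intro i₁ h₁ i₂ h₂ h
      have e1 : (i₁ : ℕ) / ℓ = (j : ℕ) := by simpa using h₁
      have e2 : (i₂ : ℕ) / ℓ = (j : ℕ) := by simpa using h₂
      have hm : (i₁ : ℕ) % ℓ = (i₂ : ℕ) % ℓ := by simpa using congrArg Fin.val h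
      have := Nat.div_add_mod (i₁ : ℕ) ℓ
      have := Nat.div_add_mod (i₂ : ℕ) ℓ
      have hq : ℓ * ((i₁ : ℕ) / ℓ) = ℓ * ((i₂ : ℕ) / ℓ) := by rw [e1, e2]
      apply Fin.ext; omega
    · intro t _
      have hlt : (j : ℕ) * ℓ + (t : ℕ) < b * ℓ := by
        have ht := t.isLt
        calc (j : ℕ) * ℓ + (t : ℕ) < ((j : ℕ) + 1) * ℓ := by nlinarith
          _ ≤ b * ℓ := Nat.mul_le_mul_right ℓ (by omega)
      refine ⟨⟨(j : ℕ) * ℓ + (t : ℕ), hlt⟩, ?_, ?_⟩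
      · simp only [Finset.mem_filter, Finset.mem_univ, true_and]
        rw [add_comm, Nat.add_mul_div_right _ _ hℓ, Nat.div_eq_of_lt t.isLt, zero_add]
      · apply Fin.ext
        show ((j : ℕ) * ℓ + (t : ℕ)) % ℓ = (t : ℕ)
        rw [add_comm, Nat.add_mul_mod_self_right, Nat.mod_eq_of_lt t.isLt]
  simpa using key

lemma zeros_eq_sum (b ℓ : ℕ) (hℓ : 0 < ℓ) (x : Fin (b * ℓ) → Bool) :
    zerosCount x = ∑ j : Fin b, blockZeros b ℓ x j := by
  unfold zerosCount blockZeros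
  exact card_filter_fiber b ℓ hℓ _

lemma blockZeros_of_allZeros {b ℓ : ℕ} (hℓ : 0 < ℓ) {x : Fin (b * ℓ) → Bool} {j : Fin b}
    (h : blockAllZeros b ℓ x j) : blockZeros b ℓ x j = ℓ := by
  unfold blockZeros
  have : (Finset.univ.filter fun i : Fin (b * ℓ) => (i : ℕ) / ℓ = (j : ℕ) ∧ x i = false)
      = Finset.univ.filter fun i : Fin (b * ℓ) => (i : ℕ) / ℓ = (j : ℕ) := by
    apply Finset.filter_congr
    intro i _
    simp only [eq_iff_iff, and_iff_left_iff_imp]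
    exact fun hd => h i hd
  rw [this, block_card b ℓ hℓ j]

lemma blockZeros_of_allOnes {b ℓ : ℕ} {x : Fin (b * ℓ) → Bool} {j : Fin b}
    (h : blockAllOnes b ℓ x j) : blockZeros b ℓ x j = 0 := by
  unfold blockZeros
  rw [Finset.card_eq_zero, Finset.filter_eq_empty_iff]
  rintro i _ ⟨hd, hf⟩
  rw [h i hd] at hf
  exact absurd hf (by simp)

lemma zrr_le_zeros (b ℓ : ℕ) (hℓ : 0 < ℓ) (x : Fin (b * ℓ) → Bool) :
    zeroRoyalRoad b ℓ x ≤ zerosCount x := by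
  rw [zeros_eq_sum b ℓ hℓ x]
  unfold zeroRoyalRoad
  rw [Finset.card_eq_sum_ones, Finset.mul_sum]
  calc ∑ j ∈ Finset.univ.filter fun j => blockAllZeros b ℓ x j, ℓ * 1
      = ∑ j ∈ Finset.univ.filter fun j => blockAllZeros b ℓ x j, blockZeros b ℓ x j := by
        apply Finset.sum_congr rfl
        intro j hj
        rw [blockZeros_of_allZeros hℓ (Finset.mem_filter.mp hj).2]; ring
    _ ≤ ∑ j : Fin b, blockZeros b ℓ x j :=
        Finset.sum_le_sum_of_subset (Finset.filter_subset _ _)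

lemma zeros_eq_zrr_of_pure (b ℓ : ℕ) (hℓ : 0 < ℓ) (x : Fin (b * ℓ) → Bool)
    (h : ∀ j : Fin b, blockAllOnes b ℓ x j ∨ blockAllZeros b ℓ x j) :
    zerosCount x = zeroRoyalRoad b ℓ x := by
  rw [zeros_eq_sum b ℓ hℓ x]
  unfold zeroRoyalRoad
  rw [← Finset.sum_filter_add_sum_filter_not Finset.univ (fun j => blockAllZeros b ℓ x j)]
  have h1 : ∑ j ∈ Finset.univ.filter (fun j => ¬ blockAllZeros b ℓ x j), blockZeros b ℓ x j = 0 := by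
    apply Finset.sum_eq_zero
    intro j hj
    have := (Finset.mem_filter.mp hj).2
    rcases h j with h' | h'
    · exact blockZeros_of_allOnes h'
    · exact absurd h' this
  rw [h1, add_zero, Finset.card_eq_sum_ones, Finset.mul_sum]
  apply Finset.sum_congr rfl
  intro j hj
  rw [blockZeros_of_allZeros hℓ (Finset.mem_filter.mp hj).2]; ring
lemma card_filter_lt (n c : ℕ) (h : c ≤ n) :
    (Finset.univ.filter fun i : Fin n => (i : ℕ) < c).card = c := by
  have key : (Finset.univ.filter fun i : Fin n => (i : ℕ) < c).card
      = (Finset.univ : Finset (Fin c)).card := by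
    apply Finset.card_bij (i := fun (i : Fin n)
      (hi : i ∈ Finset.univ.filter fun i : Fin n => (i : ℕ) < c) =>
        (⟨(i : ℕ), by simpa using hi⟩ : Fin c))
    · intro a ha; exact Finset.mem_univ _
    · intro a₁ h₁ a₂ h₂ hh; apply Fin.ext; simpa [Fin.ext_iff] using hh
    · intro t _
      exact ⟨⟨(t : ℕ), lt_of_lt_of_le t.isLt h⟩, by simpa using t.isLt, rfl⟩
  simpa using key

def yStar (n k : ℕ) : Fin n → Bool := fun i => decide (k ≤ (i : ℕ))

lemma onesCount_yStar (n k : ℕ) (h : k ≤ n) : onesCount (yStar n k) = n - k := by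
  have hz : zerosCount (yStar n k) = k := by
    unfold zerosCount yStar
    have he : (Finset.univ.filter fun i : Fin n => (decide (k ≤ (i : ℕ))) = false)
        = Finset.univ.filter fun i : Fin n => (i : ℕ) < k := by
      apply Finset.filter_congr
      intro i _
      simp
    rw [he, card_filter_lt n k h]
  have := ones_add_zeros (yStar n k)
  omega

lemma blockAllZeros_yStar_iff (b ℓ k : ℕ) (hℓ : 0 < ℓ) (j : Fin b) :
    blockAllZeros b ℓ (yStar (b * ℓ) k) j ↔ ((j : ℕ) + 1) * ℓ ≤ k := by
  constructor
  · intro h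
    have hble : ((j : ℕ) + 1) * ℓ ≤ b * ℓ := Nat.mul_le_mul_right ℓ j.isLt
    have hml : ((j : ℕ) + 1) * ℓ = (j : ℕ) * ℓ + ℓ := by ring
    have hlt : (j : ℕ) * ℓ + (ℓ - 1) < b * ℓ := by omega
    have hdiv : ((j : ℕ) * ℓ + (ℓ - 1)) / ℓ = (j : ℕ) := by
      rw [add_comm, Nat.add_mul_div_right _ _ hℓ, Nat.div_eq_of_lt (by omega), zero_add]
    have := h ⟨(j : ℕ) * ℓ + (ℓ - 1), hlt⟩ hdiv
    simp only [yStar, decide_eq_false_iff_not, not_le] at this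
    omega
  · intro h i hdiv
    simp only [yStar, decide_eq_false_iff_not, not_le]
    have h1 := Nat.div_add_mod (i : ℕ) ℓ
    have h2 : (i : ℕ) % ℓ < ℓ := Nat.mod_lt _ hℓ
    have h3 : ℓ * ((i : ℕ) / ℓ) = (j : ℕ) * ℓ := by rw [hdiv]; ring
    have h4 : ((j : ℕ) + 1) * ℓ = (j : ℕ) * ℓ + ℓ := by ring
    omega

lemma zblocks_yStar (b ℓ k : ℕ) (hℓ : 0 < ℓ) (hkn : k < b * ℓ) :
    (Finset.univ.filter fun j : Fin b => blockAllZeros b ℓ (yStar (b * ℓ) k) j).card = k / ℓ := by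
  have hdb : k / ℓ ≤ b := le_of_lt ((Nat.div_lt_iff_lt_mul hℓ).mpr (by omega))
  have he : (Finset.univ.filter fun j : Fin b => blockAllZeros b ℓ (yStar (b * ℓ) k) j)
      = Finset.univ.filter fun j : Fin b => (j : ℕ) < k / ℓ := by
    apply Finset.filter_congr
    intro j _
    rw [blockAllZeros_yStar_iff b ℓ k hℓ j, ← Nat.le_div_iff_mul_le hℓ]
    omega
  rw [he, card_filter_lt b (k / ℓ) hdb]

lemma zrr_true (b ℓ : ℕ) (hℓ : 0 < ℓ) :
    zeroRoyalRoad b ℓ (fun _ => true) = 0 := by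
  unfold zeroRoyalRoad
  convert mul_zero ℓ
  rw [Finset.card_eq_zero, Finset.filter_eq_empty_iff]
  intro j _ hz
  have hlt : (j : ℕ) * ℓ < b * ℓ := (Nat.mul_lt_mul_right hℓ).mpr j.isLt
  have hdiv : ((j : ℕ) * ℓ) / ℓ = (j : ℕ) := Nat.mul_div_cancel _ hℓ
  have := hz ⟨(j : ℕ) * ℓ, hlt⟩ hdiv
  simp at this
def flipUp {n : ℕ} (x : Fin n → Bool) (S : Finset (Fin n)) : Fin n → Bool :=
  fun i => if i ∈ S then true else x i

lemma onesCount_flipUp {n : ℕ} (x : Fin n → Bool) (S : Finset (Fin n))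
    (hS : ∀ i ∈ S, x i = false) : onesCount (flipUp x S) = onesCount x + S.card := by
  unfold onesCount flipUp
  have he : (Finset.univ.filter fun i => (if i ∈ S then true else x i) = true)
      = (Finset.univ.filter fun i => x i = true) ∪ S := by
    ext i
    simp only [Finset.mem_filter, Finset.mem_univ, true_and, Finset.mem_union]
    by_cases h : i ∈ S <;> simp [h]
  rw [he, Finset.card_union_of_disjoint]
  rw [Finset.disjoint_left]
  intro i hi hiS
  have h0 := hS i hiS
  have h1 := (Finset.mem_filter.mp hi).2
  rw [h0] at h1
  exact absurd h1 (by simp)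

lemma zrr_flipUp {b ℓ : ℕ} (x : Fin (b * ℓ) → Bool) (j : Fin b) (S : Finset (Fin (b * ℓ)))
    (hS : ∀ i ∈ S, x i = false)
    (hSblk : ∀ i ∈ S, (i : ℕ) / ℓ = (j : ℕ))
    (i₀ : Fin (b * ℓ)) (hi₀ : (i₀ : ℕ) / ℓ = (j : ℕ)) (hx : x i₀ = true) :
    zeroRoyalRoad b ℓ (flipUp x S) = zeroRoyalRoad b ℓ x := by
  have hi₀S : i₀ ∉ S := fun h => by rw [hS i₀ h] at hx; exact absurd hx (by simp)
  unfold zeroRoyalRoad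
  congr 2
  apply Finset.filter_congr
  intro j' _
  by_cases hjj : j' = j
  · subst hjj
    constructor
    · intro h
      exfalso
      have := h i₀ hi₀
      unfold flipUp at this
      rw [if_neg hi₀S, hx] at this
      exact absurd this (by simp)
    · intro h
      exfalso
      have := h i₀ hi₀
      rw [hx] at this
      exact absurd this (by simp)
  · have hag : ∀ i : Fin (b * ℓ), (i : ℕ) / ℓ = (j' : ℕ) → flipUp x S i = x i := by
      intro i hd
      unfold flipUp
      rw [if_neg]
      intro hiS
      exact hjj (Fin.ext (by rw [← hd, hSblk i hiS]))
    constructor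
    · intro h i hd
      rw [← hag i hd]
      exact h i hd
    · intro h i hd
      rw [hag i hd]
      exact h i hd

lemma oneJump_of_le {n k : ℕ} {y : Fin n → Bool} (h : onesCount y ≤ n - k) :
    oneJump n k y = k + onesCount y := by
  unfold oneJump
  rw [if_pos (Or.inl h)]

lemma oneJump_true {n k : ℕ} : oneJump n k (fun _ => true) = k + n := by
  unfold oneJump
  rw [if_pos (Or.inr rfl), onesCount_true]

lemma oneJump_of_gt {n k : ℕ} {y : Fin n → Bool} (h1 : n - k < onesCount y)
    (h2 : y ≠ fun _ => true) : oneJump n k y = n - onesCount y := by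
  unfold oneJump
  rw [if_neg]
  rintro (h | h)
  · omega
  · exact h2 h
/-- For OJZR with b > 1, 1 < k < n/2, ℓ < k and (n-k) mod ℓ > 0, the Pareto set
is exactly {1^n} ∪ { x : |x|_1 < n-k and every block is all-ones or all-zeros } ∪
{ x : |x|_1 = n-k and the number of all-zeros blocks equals ⌊k/ℓ⌋ }. -/
theorem OJZR_pareto_set_nondiv (b ℓ k : ℕ) (hb : 1 < b) (hk : 1 < k) (hkn : 2 * k < b * ℓ)
    (hℓk : ℓ < k) (hmod : (b * ℓ - k) % ℓ ≠ 0) (x : Fin (b * ℓ) → Bool) :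
    paretoOptimal (oneJump (b * ℓ) k) (zeroRoyalRoad b ℓ) x ↔
      x = (fun _ => true) ∨
        (onesCount x < b * ℓ - k ∧
          ∀ j : Fin b, blockAllOnes b ℓ x j ∨ blockAllZeros b ℓ x j) ∨
        (onesCount x = b * ℓ - k ∧
          (Finset.univ.filter fun j : Fin b => blockAllZeros b ℓ x j).card = k / ℓ) := by
  have hℓ : 0 < ℓ := by
    rcases Nat.eq_zero_or_pos ℓ with h | h
    · subst h; simp at hkn
    · exact h
  have hk0 : 0 < k := by omega
  have hkbl : k < b * ℓ := by omega
  have hkbl' : k ≤ b * ℓ := le_of_lt hkbl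
  have hySones : onesCount (yStar (b * ℓ) k) = b * ℓ - k := onesCount_yStar _ k hkbl'
  constructor
  · -- forward: Pareto optimal → in the set (by contradiction)
    intro hpar
    by_contra hnot
    push_neg at hnot
    obtain ⟨h1, h2, h3⟩ := hnot
    have hmn : onesCount x < b * ℓ := by
      rcases lt_or_eq_of_le (onesCount_le x) with h | h
      · exact h
      · exact absurd ((onesCount_eq_iff x).mp h) h1
    rcases lt_trichotomy (onesCount x) (b * ℓ - k) with hlt | heq | hgt
    · -- there is a mixed block; flip some zeros up
      obtain ⟨j, hjO, hjZ⟩ := h2 hlt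
      have hjO' : ∃ i : Fin (b * ℓ), (i : ℕ) / ℓ = (j : ℕ) ∧ x i = false := by
        by_contra hc
        push_neg at hc
        apply hjO
        intro i hd
        cases hxi : x i
        · exact absurd hxi (hc i hd)
        · rfl
      have hjZ' : ∃ i : Fin (b * ℓ), (i : ℕ) / ℓ = (j : ℕ) ∧ x i = true := by
        by_contra hc
        push_neg at hc
        apply hjZ
        intro i hd
        cases hxi : x i
        · rfl
        · exact absurd hxi (hc i hd)
      obtain ⟨i₁, hd₁, hf₁⟩ := hjO'
      obtain ⟨i₀, hd₀, ht₀⟩ := hjZ'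
      set T := Finset.univ.filter
        (fun i : Fin (b * ℓ) => (i : ℕ) / ℓ = (j : ℕ) ∧ x i = false) with hT
      have hi₁T : i₁ ∈ T := Finset.mem_filter.mpr ⟨Finset.mem_univ _, hd₁, hf₁⟩
      have hTpos : 0 < T.card := Finset.card_pos.mpr ⟨i₁, hi₁T⟩
      set s := min T.card (b * ℓ - k - onesCount x) with hs
      have hspos : 0 < s := lt_min hTpos (by omega)
      obtain ⟨S, hST, hScard⟩ := Finset.exists_subset_card_eq (s := T) (n := s) (min_le_left _ _)
      have hSzero : ∀ i ∈ S, x i = false := fun i hi => (Finset.mem_filter.mp (hST hi)).2.2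
      have hSblk : ∀ i ∈ S, (i : ℕ) / ℓ = (j : ℕ) := fun i hi => (Finset.mem_filter.mp (hST hi)).2.1
      have hones : onesCount (flipUp x S) = onesCount x + s := by
        rw [onesCount_flipUp x S hSzero, hScard]
      have hle1 : onesCount x ≤ b * ℓ - k := le_of_lt hlt
      have hle2 : onesCount (flipUp x S) ≤ b * ℓ - k := by rw [hones]; omega
      exact hpar (flipUp x S)
        ⟨by rw [oneJump_of_le hle1, oneJump_of_le hle2, hones]; omega,
         le_of_eq (zrr_flipUp x j S hSzero hSblk i₀ hd₀ ht₀).symm,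
         Or.inl (by rw [oneJump_of_le hle1, oneJump_of_le hle2, hones]; omega)⟩
    · -- onesCount = n - k but wrong number of zero blocks: dominated by yStar
      have hzne := h3 heq
      have hzrle : zeroRoyalRoad b ℓ x ≤ zerosCount x := zrr_le_zeros b ℓ hℓ x
      have hzc := zerosCount_eq x
      unfold zeroRoyalRoad at hzrle
      have hle : ℓ * (Finset.univ.filter fun j : Fin b => blockAllZeros b ℓ x j).card ≤ k := by
        omega
      have hzle : (Finset.univ.filter fun j : Fin b => blockAllZeros b ℓ x j).card ≤ k / ℓ :=
        (Nat.le_div_iff_mul_le hℓ).mpr (by rw [mul_comm]; exact hle)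
      have hzlt : (Finset.univ.filter fun j : Fin b => blockAllZeros b ℓ x j).card < k / ℓ :=
        lt_of_le_of_ne hzle hzne
      refine hpar (yStar (b * ℓ) k) ⟨?_, ?_, Or.inr ?_⟩
      · rw [oneJump_of_le (le_of_eq heq), oneJump_of_le (le_of_eq hySones), hySones, heq]
      · unfold zeroRoyalRoad
        rw [zblocks_yStar b ℓ k hℓ hkbl]
        exact Nat.mul_le_mul_left ℓ hzle
      · unfold zeroRoyalRoad
        rw [zblocks_yStar b ℓ k hℓ hkbl]
        exact mul_lt_mul_of_pos_left hzlt hℓ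
    · -- jump region: dominated by yStar
      have hzrle : zeroRoyalRoad b ℓ x ≤ zerosCount x := zrr_le_zeros b ℓ hℓ x
      have hzc := zerosCount_eq x
      unfold zeroRoyalRoad at hzrle
      have hle : ℓ * (Finset.univ.filter fun j : Fin b => blockAllZeros b ℓ x j).card ≤ k := by
        omega
      have hzle : (Finset.univ.filter fun j : Fin b => blockAllZeros b ℓ x j).card ≤ k / ℓ :=
        (Nat.le_div_iff_mul_le hℓ).mpr (by rw [mul_comm]; exact hle)
      refine hpar (yStar (b * ℓ) k) ⟨?_, ?_, Or.inl ?_⟩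
      · rw [oneJump_of_gt hgt h1, oneJump_of_le (le_of_eq hySones), hySones]
        omega
      · unfold zeroRoyalRoad
        rw [zblocks_yStar b ℓ k hℓ hkbl]
        exact Nat.mul_le_mul_left ℓ hzle
      · rw [oneJump_of_gt hgt h1, oneJump_of_le (le_of_eq hySones), hySones]
        omega
  · -- backward: the three kinds of points are Pareto optimal
    rintro (rfl | ⟨hlt, hpure⟩ | ⟨heq, hz⟩) <;> intro y hdom <;>
      obtain ⟨hf1, hf2, hstrict⟩ := hdom
    · -- x = 1^n
      rw [oneJump_true] at hf1
      by_cases hy : y = fun _ => true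
      · subst hy
        rcases hstrict with h | h <;> exact lt_irrefl _ h
      · by_cases hc : onesCount y ≤ b * ℓ - k
        · rw [oneJump_of_le hc] at hf1; omega
        · rw [oneJump_of_gt (by omega) hy] at hf1
          have := onesCount_le y
          omega
    · -- |x|₁ < n-k and all blocks pure
      have hzrx : zeroRoyalRoad b ℓ x = b * ℓ - onesCount x := by
        rw [← zeros_eq_zrr_of_pure b ℓ hℓ x hpure, zerosCount_eq]
      have hbound := zrr_le_zeros b ℓ hℓ y
      have hzcy := zerosCount_eq y
      have hoy := onesCount_le y
      have hox := onesCount_le x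
      have honesy_le : onesCount y ≤ onesCount x := by
        rw [hzrx] at hf2
        omega
      have hley : onesCount y ≤ b * ℓ - k := by omega
      rw [oneJump_of_le (le_of_lt hlt), oneJump_of_le hley] at hf1
      have hye : onesCount y = onesCount x := by omega
      have hf2' : zeroRoyalRoad b ℓ y ≤ zeroRoyalRoad b ℓ x := by
        rw [hzrx]
        omega
      rcases hstrict with h | h
      · rw [oneJump_of_le (le_of_lt hlt), oneJump_of_le hley] at h
        omega
      · omega
    · -- |x|₁ = n-k and z = k/ℓ
      have hxle : onesCount x ≤ b * ℓ - k := le_of_eq heq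
      have hf1x : oneJump (b * ℓ) k x = k + (b * ℓ - k) := by
        rw [oneJump_of_le hxle, heq]
      have hzrx : zeroRoyalRoad b ℓ x = ℓ * (k / ℓ) := by
        unfold zeroRoyalRoad
        rw [hz]
      have hkl1 : 1 ≤ k / ℓ := (Nat.one_le_div_iff hℓ).mpr (le_of_lt hℓk)
      by_cases hy : y = fun _ => true
      · subst hy
        rw [zrr_true b ℓ hℓ, hzrx] at hf2
        have : 0 < ℓ * (k / ℓ) := Nat.mul_pos hℓ hkl1
        omega
      · by_cases hc : onesCount y ≤ b * ℓ - k
        · rw [hf1x, oneJump_of_le hc] at hf1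
          have hye : onesCount y = b * ℓ - k := by omega
          have hb' := zrr_le_zeros b ℓ hℓ y
          have hzy := zerosCount_eq y
          have hzyk : zerosCount y = k := by omega
          unfold zeroRoyalRoad at hb'
          have hle : ℓ * (Finset.univ.filter fun j : Fin b => blockAllZeros b ℓ y j).card ≤ k := by
            omega
          have hzyle : (Finset.univ.filter fun j : Fin b => blockAllZeros b ℓ y j).card ≤ k / ℓ :=
            (Nat.le_div_iff_mul_le hℓ).mpr (by rw [mul_comm]; exact hle)
          have hf2' : zeroRoyalRoad b ℓ y ≤ zeroRoyalRoad b ℓ x := by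
            rw [hzrx]
            unfold zeroRoyalRoad
            exact Nat.mul_le_mul_left ℓ hzyle
          rcases hstrict with h | h
          · rw [hf1x, oneJump_of_le hc, hye] at h
            omega
          · omega
        · rw [hf1x, oneJump_of_gt (by omega) hy] at hf1
          have := onesCount_le y
          omega
end

section
/- Define, for integers n ≥ 1 and 1 ≤ k < n/2, R(n,k) = (2^n − 2·Σ_{s=n−k+1}^{n−1} C(n,s)) / 2^n, the ratio of Pareto optimal solutions of the OneJump-ZeroJump problem. Then, with k_n = ⌊n/2⌋ − 1, the sequence R(n, k_n) converges to 0 as n → ∞. -/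
lemma cb_sq_le (m : ℕ) : (2 * m + 1) * (Nat.centralBinom m) ^ 2 ≤ 16 ^ m := by
  induction m with
  | zero => simp [Nat.centralBinom]
  | succ m ih =>
    have key := Nat.succ_mul_centralBinom_succ m
    have h1 : (m + 1) ^ 2 * ((2 * (m + 1) + 1) * Nat.centralBinom (m + 1) ^ 2)
        ≤ (m + 1) ^ 2 * 16 ^ (m + 1) := by
      have hk2 : ((m + 1) * Nat.centralBinom (m + 1)) ^ 2
          = (2 * (2 * m + 1) * Nat.centralBinom m) ^ 2 := by rw [key]
      have h16 : (16:ℕ) ^ (m+1) = 16 * 16 ^ m := by ring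
      nlinarith [ih, hk2, sq_nonneg (Nat.centralBinom m)]
    exact Nat.le_of_mul_le_mul_left h1 (by positivity)

lemma sum_sym {n k : ℕ} (hk : k ≤ n) :
    ∑ s ∈ Finset.Ioc (n - k) (n - 1), n.choose s = ∑ s ∈ Finset.Ioc 0 (k - 1), n.choose s := by
  refine Finset.sum_nbij' (fun s => n - s) (fun s => n - s) ?_ ?_ ?_ ?_ ?_ <;>
    intro a ha <;> simp only [Finset.mem_Ioc] at * <;> try omega
  exact (Nat.choose_symm (by omega : a ≤ n)).symm

lemma decomp {n : ℕ} (hn : 4 ≤ n) :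
    2 ^ n = 2 + 2 * (∑ s ∈ Finset.Icc (n - (n/2-1) + 1) (n - 1), n.choose s)
      + ∑ s ∈ Finset.Ioc (n/2-1-1) (n - (n/2-1)), n.choose s := by
  set k := n / 2 - 1 with hk
  have hk1 : 1 ≤ k := by omega
  have hkn : k ≤ n := by omega
  have h1 : ∑ s ∈ Finset.Ioc 0 (k-1), n.choose s + ∑ s ∈ Finset.Ioc (k-1) (n-k), n.choose s
      = ∑ s ∈ Finset.Ioc 0 (n-k), n.choose s :=
    Finset.sum_Ioc_consecutive _ (by omega) (by omega)
  have h2 : ∑ s ∈ Finset.Ioc 0 (n-k), n.choose s + ∑ s ∈ Finset.Ioc (n-k) (n-1), n.choose s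
      = ∑ s ∈ Finset.Ioc 0 (n-1), n.choose s :=
    Finset.sum_Ioc_consecutive _ (by omega) (by omega)
  have h3 : ∑ s ∈ Finset.Ioc 0 (n-1), n.choose s + ∑ s ∈ Finset.Ioc (n-1) n, n.choose s
      = ∑ s ∈ Finset.Ioc 0 n, n.choose s :=
    Finset.sum_Ioc_consecutive _ (by omega) (by omega)
  have hlast : Finset.Ioc (n-1) n = {n} := by
    ext x; simp [Finset.mem_Ioc]; omega
  have htot : 1 + ∑ s ∈ Finset.Ioc 0 n, n.choose s = 2 ^ n := by
    rw [← Nat.sum_range_choose n]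
    have : Finset.range (n+1) = insert 0 (Finset.Ioc 0 n) := by
      ext x; simp [Finset.mem_Ioc, Finset.mem_range]
    rw [this, Finset.sum_insert (by simp)]
    simp
  have hsym := sum_sym hkn
  have hIcc : Finset.Icc (n - k + 1) (n - 1) = Finset.Ioc (n - k) (n - 1) :=
    Finset.Icc_add_one_left_eq_Ioc _ _
  rw [hIcc]
  have hchn : n.choose n = 1 := Nat.choose_self n
  rw [hlast] at h3
  simp only [Finset.sum_singleton, hchn] at h3
  omega

lemma middle_bound {n : ℕ} (hn : 4 ≤ n) :
    ∑ s ∈ Finset.Ioc (n/2-1-1) (n - (n/2-1)), n.choose s ≤ 4 * Nat.centralBinom ((n+1)/2) := by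
  have hcard : (Finset.Ioc (n/2-1-1) (n - (n/2-1))).card ≤ 4 := by
    rw [Nat.card_Ioc]; omega
  have hterm : ∀ s ∈ Finset.Ioc (n/2-1-1) (n - (n/2-1)),
      n.choose s ≤ Nat.centralBinom ((n+1)/2) := by
    intro s _
    calc n.choose s ≤ (2 * ((n+1)/2)).choose s := Nat.choose_le_choose s (by omega)
      _ ≤ Nat.centralBinom ((n+1)/2) := Nat.choose_le_centralBinom s _
  calc ∑ s ∈ Finset.Ioc (n/2-1-1) (n - (n/2-1)), n.choose s
      ≤ (Finset.Ioc (n/2-1-1) (n - (n/2-1))).card • Nat.centralBinom ((n+1)/2) :=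
        Finset.sum_le_card_nsmul _ _ _ hterm
    _ = (Finset.Ioc (n/2-1-1) (n - (n/2-1))).card * Nat.centralBinom ((n+1)/2) := by
        rw [smul_eq_mul]
    _ ≤ 4 * Nat.centralBinom ((n+1)/2) := Nat.mul_le_mul_right _ hcard

lemma cb_real_bound (m : ℕ) :
    (Nat.centralBinom m : ℝ) ≤ 4 ^ m / Real.sqrt (2 * m + 1) := by
  have h2 : ((2 * m + 1 : ℕ) : ℝ) * (Nat.centralBinom m : ℝ) ^ 2 ≤ (16 : ℝ) ^ m := by
    exact_mod_cast cb_sq_le m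
  have hpos : (0:ℝ) < 2 * (m:ℝ) + 1 := by positivity
  have hsq : ((Nat.centralBinom m : ℝ) * Real.sqrt (2 * m + 1)) ^ 2 ≤ ((4:ℝ) ^ m) ^ 2 := by
    rw [mul_pow, Real.sq_sqrt hpos.le, ← pow_mul, mul_comm m 2, pow_mul]
    push_cast at h2
    have h16 : ((4:ℝ)^2)^m = 16^m := by norm_num
    linarith
  have hmain : (Nat.centralBinom m : ℝ) * Real.sqrt (2 * m + 1) ≤ (4:ℝ) ^ m := by
    have := Real.sqrt_le_sqrt hsq
    rwa [Real.sqrt_sq (by positivity), Real.sqrt_sq (by positivity)] at this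
  rw [le_div_iff₀ (Real.sqrt_pos.mpr hpos)]
  exact hmain

/-- The ratio of Pareto optimal solutions of the OneJump–ZeroJump problem with problem size
`n` and jump parameter `k`: R(n,k) = (2^n − 2·Σ_{s=n−k+1}^{n−1} C(n,s)) / 2^n. -/
noncomputable def Rojzj (n k : ℕ) : ℝ :=
  ((2 : ℝ) ^ n - 2 * ∑ s ∈ Finset.Icc (n - k + 1) (n - 1), (n.choose s : ℝ)) / 2 ^ n

lemma R_bounds {n : ℕ} (hn : 4 ≤ n) :
    0 ≤ Rojzj n (n / 2 - 1) ∧ Rojzj n (n / 2 - 1) ≤ 18 / Real.sqrt (n + 1) := by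
  set k := n / 2 - 1 with hk
  set S : ℕ := ∑ s ∈ Finset.Icc (n - k + 1) (n - 1), n.choose s with hS
  set M : ℕ := ∑ s ∈ Finset.Ioc (k - 1) (n - k), n.choose s with hM
  have hdec : 2 ^ n = 2 + 2 * S + M := decomp hn
  have hMb : M ≤ 4 * Nat.centralBinom ((n+1)/2) := middle_bound hn
  set m := (n+1)/2 with hm
  have hcast : (∑ s ∈ Finset.Icc (n - k + 1) (n - 1), (n.choose s : ℝ)) = (S : ℝ) := by
    push_cast [hS]; ring
  have hnum : (2 : ℝ) ^ n - 2 * (S : ℝ) = 2 + (M : ℝ) := by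
    have h0 : ((2:ℝ))^n = 2 + 2*(S:ℝ) + (M:ℝ) := by exact_mod_cast hdec
    linarith
  have hpow : (0:ℝ) < 2 ^ n := by positivity
  have hsq1 : (1:ℝ) ≤ Real.sqrt (n+1) := by
    have h := Real.sqrt_le_sqrt (show (1:ℝ) ≤ (n:ℝ)+1 by
      linarith [Nat.cast_nonneg (α := ℝ) n])
    rwa [Real.sqrt_one] at h
  have hsqpos : (0:ℝ) < Real.sqrt (n+1) := by linarith
  constructor
  · unfold Rojzj
    rw [hcast, hnum]
    positivity
  · unfold Rojzj
    rw [hcast, hnum, div_le_div_iff₀ hpow hsqpos]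
    -- need (2 + M) * sqrt(n+1) ≤ 18 * 2^n
    have hcb : (Nat.centralBinom m : ℝ) ≤ 4 ^ m / Real.sqrt (2 * m + 1) := cb_real_bound m
    have hsqle : Real.sqrt (n+1) ≤ Real.sqrt (2 * m + 1) := by
      apply Real.sqrt_le_sqrt; push_cast; have : n + 1 ≤ 2 * m + 1 := by omega
      exact_mod_cast this
    have hsqpos2 : (0:ℝ) < Real.sqrt (2 * m + 1) := by positivity
    have h4m : (4:ℝ) ^ m ≤ 4 * 2 ^ n := by
      have : (4:ℝ) ^ m = 2 ^ (2 * m) := by rw [pow_mul]; norm_num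
      rw [this, show (4:ℝ) * 2^n = 2^(n+2) by ring]
      apply pow_le_pow_right₀ (by norm_num); omega
    have hcb2 : (Nat.centralBinom m : ℝ) * Real.sqrt (n+1) ≤ 4 * 2 ^ n := by
      calc (Nat.centralBinom m : ℝ) * Real.sqrt (n+1)
          ≤ (4 ^ m / Real.sqrt (2*m+1)) * Real.sqrt (2*m+1) := by
            apply mul_le_mul hcb hsqle hsqpos.le (by positivity)
        _ = 4 ^ m := by field_simp
        _ ≤ 4 * 2 ^ n := h4m
    have hsqle2n : Real.sqrt (n+1) ≤ 2 ^ n := by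
      calc Real.sqrt (n+1) ≤ (n:ℝ)+1 := by
            have h := Real.sqrt_le_sqrt (show (n:ℝ)+1 ≤ ((n:ℝ)+1)^2 by
              nlinarith [Nat.cast_nonneg (α := ℝ) n])
            rwa [Real.sqrt_sq (by positivity)] at h
        _ ≤ 2 ^ n := by exact_mod_cast Nat.succ_le_of_lt (Nat.lt_two_pow_self (n := n))
    have hMre : (M : ℝ) ≤ 4 * (Nat.centralBinom m : ℝ) := by exact_mod_cast hMb
    nlinarith [hcb2, hsqle2n, hsqpos, Nat.cast_nonneg (α := ℝ) M,
      Nat.cast_nonneg (α := ℝ) (Nat.centralBinom m)]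

/-- With k_n = ⌊n/2⌋ − 1, the ratio R(n, k_n) converges to 0 as n → ∞. -/
theorem OJZJ_ratio_tendsto_zero :
    Filter.Tendsto (fun n : ℕ => Rojzj n (n / 2 - 1)) Filter.atTop (nhds 0) := by
  have hup : Filter.Tendsto (fun n : ℕ => 18 / Real.sqrt (n + 1)) Filter.atTop (nhds 0) := by
    have h1 : Filter.Tendsto (fun n : ℕ => ((n : ℝ) + 1)) Filter.atTop Filter.atTop :=
      Filter.tendsto_atTop_add_const_right _ 1 tendsto_natCast_atTop_atTop
    have hs : Filter.Tendsto Real.sqrt Filter.atTop Filter.atTop := by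
      apply Filter.tendsto_atTop_atTop_of_monotone (fun a b h => Real.sqrt_le_sqrt h)
      intro b; exact ⟨b^2, by rw [Real.sqrt_sq_eq_abs]; exact le_abs_self b⟩
    have h2 : Filter.Tendsto (fun n : ℕ => Real.sqrt ((n : ℝ) + 1)) Filter.atTop Filter.atTop :=
      hs.comp h1
    simpa [div_eq_mul_inv] using (h2.inv_tendsto_atTop).const_mul (18:ℝ)
  apply tendsto_of_tendsto_of_tendsto_of_le_of_le' tendsto_const_nhds hup
  · filter_upwards [Filter.eventually_ge_atTop 4] with n hn
    exact (R_bounds hn).1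
  · filter_upwards [Filter.eventually_ge_atTop 4] with n hn
    exact (R_bounds hn).2
end

section
/- Define, for integers n ≥ 1 and 1 ≤ k < n/2, R(n,k) = (2^n − 2·Σ_{s=n−k+1}^{n−1} C(n,s)) / 2^n. There exists N such that for all n ≥ N and all integers k with 1 ≤ k ≤ n/2 − sqrt(n·ln 4 / 2), one has R(n,k) ≥ 1/2. -/
open Finset Real

theorem sum_range_choose_mul_exp (n : ℕ) (l : ℝ) :
    ∑ s ∈ range (n + 1), (n.choose s : ℝ) * exp (l * (s - n / 2)) = (2 * cosh (l / 2)) ^ n := by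
  rw [cosh_eq, mul_div_cancel₀ _ two_ne_zero, add_pow]
  refine sum_congr rfl fun s hs => ?_
  rw [← exp_nat_mul, ← exp_nat_mul, ← exp_add, Nat.cast_sub (Nat.lt_succ_iff.mp (mem_range.mp hs))]
  ring_nf

theorem sum_range_choose_mul_exp_le (n : ℕ) (l : ℝ) :
    ∑ s ∈ range (n + 1), (n.choose s : ℝ) * exp (l * (s - n / 2)) ≤
      2 ^ n * exp (n * l ^ 2 / 8) := by
  calc _ = (2 * cosh (l / 2)) ^ n := sum_range_choose_mul_exp n l
    _ ≤ (2 * exp (l ^ 2 / 8)) ^ n := by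
      gcongr
      exact (cosh_le_exp_half_sq _).trans_eq (by ring_nf)
    _ = 2 ^ n * exp (n * l ^ 2 / 8) := by rw [mul_pow, ← exp_nat_mul, mul_div_assoc]

theorem sum_Icc_choose_le_chernoff (n m : ℕ) {l : ℝ} (hl : 0 ≤ l) :
    ∑ s ∈ Icc m n, (n.choose s : ℝ) ≤ 2 ^ n * exp (n * l ^ 2 / 8 - l * (m - n / 2)) := by
  calc ∑ s ∈ Icc m n, (n.choose s : ℝ)
      ≤ ∑ s ∈ Icc m n, (n.choose s : ℝ) * exp (l * (s - n / 2)) * exp (-(l * (m - n / 2))) := by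
        simp_rw [mul_assoc]
        refine sum_le_sum fun s hs => le_mul_of_one_le_right (Nat.cast_nonneg _) ?_
        rw [← exp_add, one_le_exp_iff]
        have : (m : ℝ) ≤ s := by exact_mod_cast (mem_Icc.mp hs).1
        nlinarith
    _ ≤ ∑ s ∈ range (n + 1),
          (n.choose s : ℝ) * exp (l * (s - n / 2)) * exp (-(l * (m - n / 2))) := by
        refine sum_le_sum_of_subset_of_nonneg (fun s hs => ?_) fun _ _ _ => by positivity
        simpa [Nat.lt_succ_iff] using (mem_Icc.mp hs).2
    _ ≤ 2 ^ n * exp (n * l ^ 2 / 8) * exp (-(l * (m - n / 2))) := by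
        rw [← sum_mul]; gcongr; exact sum_range_choose_mul_exp_le n l
    _ = 2 ^ n * exp (n * l ^ 2 / 8 - l * (m - n / 2)) := by
        rw [mul_assoc, ← exp_add, ← sub_eq_add_neg]

theorem sum_Icc_choose_le_hoeffding (n m : ℕ) (hn : 0 < n) {t : ℝ} (ht : 0 ≤ t)
    (hm : n / 2 + t ≤ m) :
    ∑ s ∈ Icc m n, (n.choose s : ℝ) ≤ 2 ^ n * exp (-(2 * t ^ 2 / n)) := by
  have hn' : (0 : ℝ) < n := by exact_mod_cast hn
  refine (sum_Icc_choose_le_chernoff n m (l := 4 * t / n) (by positivity)).trans ?_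
  gcongr 2 ^ n * exp ?_
  have : 4 * t / n * t ≤ 4 * t / n * (m - n / 2) := by gcongr; linarith
  field_simp at this ⊢
  nlinarith

/-- There exists N such that for all n ≥ N and all integers k with
1 ≤ k ≤ n/2 − sqrt(n·ln 4 / 2), one has R(n,k) ≥ 1/2. -/
theorem OJZJ_ratio_half :
    ∃ N : ℕ, ∀ n : ℕ, N ≤ n → ∀ k : ℕ, 1 ≤ k →
      (k : ℝ) ≤ (n : ℝ) / 2 - Real.sqrt ((n : ℝ) * Real.log 4 / 2) →
      (1 / 2 : ℝ) ≤ Rojzj n k := by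
  refine ⟨1, fun n hn k _ hk => ?_⟩
  set t := √(n * log 4 / 2)
  have ht : 2 * t ^ 2 / n = log 4 := by
    rw [sq_sqrt (by positivity)]; field_simp
  have hkn : k ≤ n := by
    have : (k : ℝ) ≤ n := by linarith [sqrt_nonneg (n * log 4 / 2), (n.cast_nonneg : (0 : ℝ) ≤ n)]
    exact_mod_cast this
  have htail : ∑ s ∈ Icc (n - k + 1) (n - 1), (n.choose s : ℝ) ≤ 2 ^ n / 4 := calc
    _ ≤ ∑ s ∈ Icc (n - k + 1) n, (n.choose s : ℝ) :=
      sum_le_sum_of_subset_of_nonneg (Icc_subset_Icc_right (Nat.sub_le n 1))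
        fun _ _ _ => by positivity
    _ ≤ 2 ^ n * exp (-(2 * t ^ 2 / n)) := by
      refine sum_Icc_choose_le_hoeffding n _ hn (sqrt_nonneg _) ?_
      push_cast [hkn]
      linarith
    _ = 2 ^ n / 4 := by rw [ht, exp_neg, exp_log (by norm_num)]; ring
  rw [Rojzj, le_div_iff₀ (by positivity)]
  linarith
end
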